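/- arXiv:2406.18280 — 7 statements merged into one kernel-verified Lean document; each statement's English description precedes it below -/
import Mathlib

section
/- Let ρ and σ be density matrices on ℂ^(d_1) ⊗ ... ⊗ ℂ^(d_n), and let s_k denote the swap operator exchanging the k-th tensor factor of the first copy with the k-th tensor factor of the second copy in (⊗_i ℂ^(d_i)) ⊗ (⊗_i ℂ^(d_i)). Then for any a = (a_1,...,a_n) ∈ {0,1}^n, Tr[(s_1^(a_1) ⊗ s_2^(a_2) ⊗ ... ⊗ s_n^(a_n))(ρ ⊗ σ)] = Tr(ρ_S σ_S), where S = supp(a). -/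
/-!
Split every multi-index into its components inside and outside `S` (`Equiv.piEquivPiSubtypeProd`).
In these coordinates the partial swap exchanges the `S`-components of the two copies, and the
resulting quadruple sum is exactly the one obtained by expanding `Tr(ρ_S σ_S)`.
-/

open Finset ComplexOrder

noncomputable def ptrace {n : ℕ} (d : Fin n → ℕ) (S : Finset (Fin n))
    (ρ : Matrix ((i : Fin n) → Fin (d i)) ((i : Fin n) → Fin (d i)) ℂ) :
    Matrix ((i : {j : Fin n // j ∈ S}) → Fin (d i.1))
           ((i : {j : Fin n // j ∈ S}) → Fin (d i.1)) ℂ :=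
  fun x y => ∑ z : (i : {j : Fin n // j ∉ S}) → Fin (d i.1),
    ρ (fun i => if h : i ∈ S then x ⟨i, h⟩ else z ⟨i, h⟩)
      (fun i => if h : i ∈ S then y ⟨i, h⟩ else z ⟨i, h⟩)

/-- `Tr(ρ_S σ_S)`, the overlap of the reduced states on `S`. -/
noncomputable def overlap {n : ℕ} (d : Fin n → ℕ) (S : Finset (Fin n))
    (ρ σ : Matrix ((i : Fin n) → Fin (d i)) ((i : Fin n) → Fin (d i)) ℂ) : ℂ :=
  (ptrace d S ρ * ptrace d S σ).trace

/-- A density matrix: positive semidefinite with unit trace. -/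
def IsDensity {m : Type*} [Fintype m] [DecidableEq m] (ρ : Matrix m m ℂ) : Prop :=
  ρ.PosSemidef ∧ ρ.trace = 1

open Kronecker

/-- The partial-swap operator on two copies of `⊗ᵢ ℂ^(dᵢ)`: it swaps the `k`-th factor of
the first copy with the `k`-th factor of the second copy exactly for `k ∈ a`
(i.e. `s₁^(a₁) ⊗ ⋯ ⊗ sₙ^(aₙ)` with `a` the indicator bitstring of the set `a`). -/
noncomputable def swapOp {n : ℕ} (d : Fin n → ℕ) (a : Finset (Fin n)) :
    Matrix ((((i : Fin n) → Fin (d i)) × ((i : Fin n) → Fin (d i))))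
           ((((i : Fin n) → Fin (d i)) × ((i : Fin n) → Fin (d i)))) ℂ :=
  fun r c => if r = ((fun i => if i ∈ a then c.2 i else c.1 i),
                     (fun i => if i ∈ a then c.1 i else c.2 i)) then 1 else 0

theorem Matrix.trace_of_ite_eq_mul {m R : Type*} [Fintype m] [DecidableEq m] [Semiring R]
    (f : m → m) (M : Matrix m m R) :
    (Matrix.of (fun r c => if r = f c then 1 else 0) * M).trace = ∑ c, M c (f c) := by
  simp only [Matrix.trace, Matrix.diag, Matrix.mul_apply, Matrix.of_apply, ite_mul, one_mul,
    zero_mul]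
  rw [Finset.sum_comm]
  simp only [Finset.sum_ite_eq', Finset.mem_univ, if_true]

theorem Equiv.piEquivPiSubtypeProd_symm_ite {ι : Type*} {β : ι → Type*} (p : ι → Prop)
    [DecidablePred p] (x y : ∀ i : {i // p i}, β i) (z w : ∀ i : {i // ¬p i}, β i) :
    (fun i => if p i then (piEquivPiSubtypeProd p β).symm (y, w) i
      else (piEquivPiSubtypeProd p β).symm (x, z) i) = (piEquivPiSubtypeProd p β).symm (y, z) := by
  funext i
  by_cases h : p i <;> simp [piEquivPiSubtypeProd, h]

theorem overlap_eq_sum {n : ℕ} (d : Fin n → ℕ) (S : Finset (Fin n))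
    (ρ σ : Matrix ((i : Fin n) → Fin (d i)) ((i : Fin n) → Fin (d i)) ℂ) :
    let e := (Equiv.piEquivPiSubtypeProd (· ∈ S) fun i => Fin (d i)).symm
    overlap d S ρ σ = ∑ x, ∑ y, ∑ z, ∑ w,
      ρ (e (x, z)) (e (y, z)) * σ (e (y, w)) (e (x, w)) := by
  simp only [overlap, ptrace, Matrix.trace, Matrix.diag, Matrix.mul_apply, Finset.sum_mul_sum]
  rfl

theorem swap_trick_general {n : ℕ} (d : Fin n → ℕ)
    (ρ σ : Matrix ((i : Fin n) → Fin (d i)) ((i : Fin n) → Fin (d i)) ℂ)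
    (a : Finset (Fin n)) :
    (swapOp d a * (ρ ⊗ₖ σ)).trace = overlap d a ρ σ := by
  let e := (Equiv.piEquivPiSubtypeProd (· ∈ a) fun i => Fin (d i)).symm
  have hswap : swapOp d a = Matrix.of fun r c => if r = _ then 1 else 0 := rfl
  rw [hswap, Matrix.trace_of_ite_eq_mul, overlap_eq_sum, ← (Equiv.prodCongr e e).sum_comp]
  simp only [e, Fintype.sum_prod_type, Equiv.prodCongr_apply, Prod.map, Matrix.kroneckerMap_apply,
    Equiv.piEquivPiSubtypeProd_symm_ite]
  exact Finset.sum_congr rfl fun _ _ => Finset.sum_comm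

/-- The generalized swap trick: for density matrices `ρ, σ` and any bitstring
`a ∈ {0,1}^n` (identified with the subset `S = supp a`),
`Tr[(s₁^(a₁) ⊗ ⋯ ⊗ sₙ^(aₙ))(ρ ⊗ σ)] = Tr(ρ_S σ_S)`. -/
theorem swap_trick {n : ℕ} (d : Fin n → ℕ)
    (ρ σ : Matrix ((i : Fin n) → Fin (d i)) ((i : Fin n) → Fin (d i)) ℂ)
    (hρ : IsDensity ρ) (hσ : IsDensity σ) (a : Finset (Fin n)) :
    (swapOp d a * (ρ ⊗ₖ σ)).trace = overlap d a ρ σ :=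
  swap_trick_general d ρ σ a
end

section
/- Let ρ, σ be density matrices on an n-partite Hilbert space, and for T ⊆ [n] define the shadow enumerator s_T(ρ,σ) := (1/2^n) ∑_{S ⊆ [n]} (-1)^(|S ∩ T^c|) Tr(ρ_S σ_S). Then s_T(ρ,σ) ≥ 0 for every T ⊆ [n] (the shadow inequalities). -/
open Finset ComplexOrder

/-!
Regroup `ρ ⊗ σ` site by site, so that it acts on `⊗_i (ℂ^{d_i} ⊗ ℂ^{d_i})`. Then
`Tr(ρ_S σ_S) = Tr((ρ ⊗ σ) W_S)` with `W_S = ⊗_i (if i ∈ S then F_i else 1)`, where `F_i`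
swaps the two copies of site `i`. Summing over `S` factorises:
`2⁻ⁿ ∑_S (-1)^|S ∩ Tᶜ| W_S = ⊗_i (1 ± F_i)/2`, with `+` on `T` and `-` off `T`. Each factor
projects onto the symmetric or antisymmetric subspace, so the product is a projector `Π`, and
`s_T(ρ, σ) = Tr((ρ ⊗ σ) Π) = Tr(Π (ρ ⊗ σ) Π) ≥ 0`.
-/

open Kronecker Matrix

namespace Matrix

variable {ι : Type*} [Fintype ι] {κ μ ν : ι → Type*} {R : Type*}

def piKronecker [CommMonoid R] (A : ∀ i, Matrix (κ i) (μ i) R) :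
    Matrix (∀ i, κ i) (∀ i, μ i) R :=
  fun p q => ∏ i, A i (p i) (q i)

theorem piKronecker_apply [CommMonoid R] (A : ∀ i, Matrix (κ i) (μ i) R) (p : ∀ i, κ i)
    (q : ∀ i, μ i) : piKronecker A p q = ∏ i, A i (p i) (q i) :=
  rfl

theorem piKronecker_mul [CommSemiring R] [DecidableEq ι] [∀ i, Fintype (μ i)]
    (A : ∀ i, Matrix (κ i) (μ i) R) (B : ∀ i, Matrix (μ i) (ν i) R) :
    piKronecker A * piKronecker B = piKronecker fun i => A i * B i := by
  ext p q
  simp only [mul_apply, piKronecker_apply, Finset.prod_univ_sum, ← Finset.prod_mul_distrib]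
  rfl

theorem conjTranspose_piKronecker [CommSemiring R] [StarRing R]
    (A : ∀ i, Matrix (κ i) (μ i) R) :
    (piKronecker A)ᴴ = piKronecker fun i => (A i)ᴴ := by
  ext p q
  simp [piKronecker_apply, star_prod]

theorem piKronecker_smul [CommSemiring R] (c : ι → R) (A : ∀ i, Matrix (κ i) (μ i) R) :
    (piKronecker fun i => c i • A i) = (∏ i, c i) • piKronecker A := by
  ext p q
  simp [piKronecker_apply, Finset.prod_mul_distrib]

theorem sum_piKronecker_ite_mem [CommSemiring R] [DecidableEq ι]
    (A B : ∀ i, Matrix (κ i) (μ i) R) :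
    ∑ S : Finset ι, (piKronecker fun i => if i ∈ S then A i else B i) =
      piKronecker fun i => A i + B i := by
  ext p q
  simp only [sum_apply, piKronecker_apply, add_apply, Fintype.prod_add]
  refine Finset.sum_congr rfl fun S _ => ?_
  rw [Finset.prod_congr rfl fun i _ => apply_ite (fun M : Matrix (κ i) (μ i) R => M (p i) (q i))
    _ _ _, Finset.prod_ite]
  simp [Finset.filter_notMem_eq_sdiff, Finset.compl_eq_univ_sdiff]

theorem piKronecker_permMatrix [CommSemiring R] [∀ i, DecidableEq (κ i)]
    (σ : ∀ i, Equiv.Perm (κ i)) :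
    (piKronecker fun i => (σ i).permMatrix R) =
      Equiv.Perm.permMatrix R (Equiv.piCongrRight σ) := by
  ext p q
  simp [piKronecker_apply, Equiv.Perm.permMatrix, PEquiv.toMatrix_apply, Finset.prod_boole,
    funext_iff]

theorem _root_.IsStarProjection.piKronecker [CommSemiring R] [StarRing R] [DecidableEq ι]
    [∀ i, Fintype (κ i)] {A : ∀ i, Matrix (κ i) (κ i) R}
    (hA : ∀ i, IsStarProjection (A i)) :
    IsStarProjection (piKronecker A) where
  isIdempotentElem := by
    rw [IsIdempotentElem, piKronecker_mul]
    simp_rw [(hA _).isIdempotentElem.eq]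
  isSelfAdjoint := by
    rw [IsSelfAdjoint, star_eq_conjTranspose, conjTranspose_piKronecker]
    simp_rw [← star_eq_conjTranspose, (hA _).isSelfAdjoint.star_eq]

theorem PosSemidef.trace_mul_nonneg_of_isStarProjection {m 𝕜 : Type*} [Fintype m] [RCLike 𝕜]
    {X P : Matrix m m 𝕜} (hX : X.PosSemidef) (hP : IsStarProjection P) :
    0 ≤ (X * P).trace := by
  have hPP : X * P = X * (Pᴴ * P) := by
    rw [← star_eq_conjTranspose, hP.isSelfAdjoint.star_eq, hP.isIdempotentElem.eq]
  rw [hPP, ← Matrix.mul_assoc, trace_mul_comm, ← Matrix.mul_assoc]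
  exact (hX.mul_mul_conjTranspose_same P).trace_nonneg

end Matrix

theorem isStarProjection_half_smul_one_add {𝕜 A : Type*} [Field 𝕜] [NeZero (2 : 𝕜)]
    [StarRing 𝕜] [Ring A] [StarRing A] [Algebra 𝕜 A] [StarModule 𝕜 A] {u : A}
    (hu : IsSelfAdjoint u) (hu2 : u * u = 1) : IsStarProjection ((1 / 2 : 𝕜) • (1 + u)) where
  isIdempotentElem := by
    rw [IsIdempotentElem, smul_mul_smul, add_mul, one_mul, mul_add, mul_one, hu2, add_comm u 1,
      ← two_smul 𝕜 (1 + u), smul_smul]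
    congr 1
    field_simp
  isSelfAdjoint := by
    rw [IsSelfAdjoint, star_smul, star_add, star_one, hu.star_eq]
    simp

namespace Equiv.Perm

variable {m R : Type*} [DecidableEq m] {σ : Equiv.Perm m}

theorem isSelfAdjoint_permMatrix [NonAssocSemiring R] [StarRing R]
    (hσ : Function.Involutive σ) : IsSelfAdjoint (σ.permMatrix R) := by
  rw [IsSelfAdjoint, star_eq_conjTranspose, conjTranspose_permMatrix]
  congr 1
  ext x
  exact inv_eq_iff_eq.mpr (hσ x).symm

theorem permMatrix_mul_self [Fintype m] [NonAssocSemiring R] (hσ : Function.Involutive σ) :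
    σ.permMatrix R * σ.permMatrix R = 1 := by
  rw [← permMatrix_mul, show σ * σ = 1 from Equiv.ext hσ, permMatrix_one]

end Equiv.Perm

section PartialSwap

variable {ι : Type*} [Fintype ι] {κ : ι → Type*}

def Matrix.sitewiseKronecker {R : Type*} [Mul R] (A B : Matrix (∀ i, κ i) (∀ i, κ i) R) :
    Matrix (∀ i, κ i × κ i) (∀ i, κ i × κ i) R :=
  (A ⊗ₖ B).submatrix (Equiv.arrowProdEquivProdArrow _ _ _) (Equiv.arrowProdEquivProdArrow _ _ _)

theorem Matrix.PosSemidef.sitewiseKronecker [∀ i, Fintype (κ i)]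
    {A B : Matrix (∀ i, κ i) (∀ i, κ i) ℂ} (hA : A.PosSemidef) (hB : B.PosSemidef) :
    (A.sitewiseKronecker B).PosSemidef :=
  (hA.kronecker hB).submatrix _

variable [DecidableEq ι] [∀ i, DecidableEq (κ i)]

def partialSwap (S : Finset ι) : Equiv.Perm (∀ i, κ i × κ i) :=
  Equiv.piCongrRight fun i => if i ∈ S then Equiv.prodComm (κ i) (κ i) else Equiv.refl _

variable (κ) in
noncomputable def signedSwap (T : Finset ι) (i : ι) : Matrix (κ i × κ i) (κ i × κ i) ℂ :=
  if i ∈ T then Equiv.Perm.permMatrix ℂ (Equiv.prodComm (κ i) (κ i))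
  else -Equiv.Perm.permMatrix ℂ (Equiv.prodComm (κ i) (κ i))

variable (κ) in
noncomputable def shadowProjector (T : Finset ι) :
    Matrix (∀ i, κ i × κ i) (∀ i, κ i × κ i) ℂ :=
  piKronecker fun i => (1 / 2 : ℂ) • (1 + signedSwap κ T i)

theorem isStarProjection_shadowProjector [∀ i, Fintype (κ i)] (T : Finset ι) :
    IsStarProjection (shadowProjector κ T) := by
  refine IsStarProjection.piKronecker fun i => isStarProjection_half_smul_one_add ?_ ?_
  all_goals
    have hF : Function.Involutive (Equiv.prodComm (κ i) (κ i)) := Prod.swap_swap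
    unfold signedSwap
    split_ifs
  · exact Equiv.Perm.isSelfAdjoint_permMatrix hF
  · exact (Equiv.Perm.isSelfAdjoint_permMatrix hF).neg
  · exact Equiv.Perm.permMatrix_mul_self hF
  · rw [neg_mul_neg, Equiv.Perm.permMatrix_mul_self hF]

theorem permMatrix_partialSwap (S : Finset ι) :
    (partialSwap S).permMatrix ℂ =
      piKronecker fun i =>
        if i ∈ S then Equiv.Perm.permMatrix ℂ (Equiv.prodComm (κ i) (κ i)) else 1 := by
  rw [partialSwap, ← piKronecker_permMatrix]
  congr 1
  ext1 i
  split_ifs <;> simp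

theorem neg_one_pow_smul_permMatrix_partialSwap (S T : Finset ι) :
    (-1 : ℂ) ^ (S ∩ Tᶜ).card • (partialSwap S).permMatrix ℂ =
      piKronecker fun i => if i ∈ S then signedSwap κ T i else 1 := by
  have hsign : (-1 : ℂ) ^ (S ∩ Tᶜ).card = ∏ i, if i ∈ S ∩ Tᶜ then -1 else 1 := by
    rw [Finset.prod_ite_mem, Finset.univ_inter, Finset.prod_const]
  rw [hsign, permMatrix_partialSwap, ← piKronecker_smul]
  congr 1
  ext1 i
  by_cases hS : i ∈ S <;> by_cases hT : i ∈ T <;> simp [hS, hT, signedSwap]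

theorem sum_neg_one_pow_smul_permMatrix_partialSwap (T : Finset ι) :
    ∑ S : Finset ι, (-1 : ℂ) ^ (S ∩ Tᶜ).card • (partialSwap S).permMatrix ℂ =
      (2 : ℂ) ^ Fintype.card ι • shadowProjector κ T := by
  simp_rw [neg_one_pow_smul_permMatrix_partialSwap, sum_piKronecker_ite_mem, shadowProjector,
    piKronecker_smul, smul_smul, Finset.prod_const, Finset.card_univ, ← mul_pow,
    mul_one_div_cancel (two_ne_zero' ℂ), one_pow, one_smul, add_comm]

end PartialSwap

theorem Finset.piecewise_piEquivPiSubtypeProd_symm {ι : Type*} {κ : ι → Type*} (S : Finset ι)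
    [DecidablePred (· ∈ S)] (x y : ∀ i : S, κ i) (z w : ∀ i : {i // i ∉ S}, κ i) :
    S.piecewise ((Equiv.piEquivPiSubtypeProd (· ∈ S) κ).symm (x, z))
        ((Equiv.piEquivPiSubtypeProd (· ∈ S) κ).symm (y, w)) =
      (Equiv.piEquivPiSubtypeProd (· ∈ S) κ).symm (x, w) := by
  ext i
  by_cases h : i ∈ S <;> simp [h, Equiv.piEquivPiSubtypeProd]

section Overlap

variable {n : ℕ} (d : Fin n → ℕ)
  (ρ σ : Matrix ((i : Fin n) → Fin (d i)) ((i : Fin n) → Fin (d i)) ℂ)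

theorem overlap_eq_sum_piecewise (S : Finset (Fin n)) :
    overlap d S ρ σ = ∑ a, ∑ c, ρ a (S.piecewise c a) * σ c (S.piecewise a c) := by
  set e := (Equiv.piEquivPiSubtypeProd (· ∈ S) fun i => Fin (d i)).symm
  rw [← e.sum_comp]
  simp_rw [← e.sum_comp, Fintype.sum_prod_type, e, Finset.piecewise_piEquivPiSubtypeProd_symm]
  simp only [overlap, Matrix.trace, Matrix.diag, Matrix.mul_apply, ptrace, Finset.sum_mul_sum]
  refine Finset.sum_congr rfl fun x _ => ?_
  rw [Finset.sum_comm]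
  rfl

theorem overlap_eq_trace_mul_permMatrix_partialSwap (S : Finset (Fin n)) :
    overlap d S ρ σ = (ρ.sitewiseKronecker σ * (partialSwap S).permMatrix ℂ).trace := by
  rw [overlap_eq_sum_piecewise, Equiv.Perm.permMatrix, PEquiv.mul_toMatrix_toPEquiv]
  simp only [trace, Matrix.diag, submatrix_apply, sitewiseKronecker, kroneckerMap_apply, id]
  rw [← (Equiv.arrowProdEquivProdArrow _ _ _).symm.sum_comp, Fintype.sum_prod_type]
  refine Finset.sum_congr rfl fun a _ => Finset.sum_congr rfl fun c _ => ?_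
  congr 2 <;> ext i <;> by_cases h : i ∈ S <;> simp [h, partialSwap]

theorem sum_neg_one_pow_mul_overlap (T : Finset (Fin n)) :
    ∑ S : Finset (Fin n), (-1 : ℂ) ^ (S ∩ Tᶜ).card * overlap d S ρ σ =
      2 ^ n * (ρ.sitewiseKronecker σ * shadowProjector _ T).trace := by
  calc ∑ S : Finset (Fin n), (-1 : ℂ) ^ (S ∩ Tᶜ).card * overlap d S ρ σ
      = ∑ S : Finset (Fin n), (ρ.sitewiseKronecker σ *
          ((-1 : ℂ) ^ (S ∩ Tᶜ).card • (partialSwap S).permMatrix ℂ)).trace := by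
        simp_rw [overlap_eq_trace_mul_permMatrix_partialSwap, Matrix.mul_smul, trace_smul,
          smul_eq_mul]
    _ = _ := by
        rw [← trace_sum, ← Matrix.mul_sum, sum_neg_one_pow_smul_permMatrix_partialSwap,
          Matrix.mul_smul, trace_smul, Fintype.card_fin, smul_eq_mul]

end Overlap

/-- The shadow inequalities: for density matrices `ρ, σ` on an `n`-partite space and any
`T ⊆ [n]`, the shadow enumerator
`s_T(ρ,σ) = (1/2^n) ∑_{S ⊆ [n]} (-1)^(|S ∩ Tᶜ|) Tr(ρ_S σ_S)` is nonnegative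
(as a complex number, with respect to the complex order). -/
theorem shadow_inequalities {n : ℕ} (d : Fin n → ℕ)
    (ρ σ : Matrix ((i : Fin n) → Fin (d i)) ((i : Fin n) → Fin (d i)) ℂ)
    (hρ : IsDensity ρ) (hσ : IsDensity σ) (T : Finset (Fin n)) :
    0 ≤ (1 / 2 ^ n : ℂ) *
        ∑ S : Finset (Fin n), (-1 : ℂ) ^ (S ∩ Tᶜ).card * overlap d S ρ σ := by
  rw [sum_neg_one_pow_mul_overlap, one_div, inv_mul_cancel_left₀ (by positivity)]
  exact (hρ.1.sitewiseKronecker hσ.1).trace_mul_nonneg_of_isStarProjection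
    (isStarProjection_shadowProjector T)
end

section
/- Let ψ be a unit vector in an n-partite Hilbert space with ρ = |ψ⟩⟨ψ|, and define the concurrence C_{S|S^c}(ψ) = sqrt(2(1 - Tr(ρ_S²))) for each bipartition S | S^c. Then for every nonempty subset T ⊆ [n], ∑_{S ⊆ [n]} (-1)^(|S ∩ T|) C_{S|S^c}(ψ)² ≤ 0. -/
open Finset ComplexOrder

open scoped symmDiff

section Aux

variable {n : ℕ} {d : Fin n → ℕ}

private def mix (S : Finset (Fin n)) (u v : (i : Fin n) → Fin (d i)) :
    (i : Fin n) → Fin (d i) := fun i => if i ∈ S then u i else v i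

private def sw (S : Finset (Fin n))
    (p : ((i : Fin n) → Fin (d i)) × ((i : Fin n) → Fin (d i))) :
    ((i : Fin n) → Fin (d i)) × ((i : Fin n) → Fin (d i)) :=
  (mix S p.2 p.1, mix S p.1 p.2)

private lemma sw_invol (S : Finset (Fin n)) :
    Function.Involutive (sw (d := d) S) := by
  intro p
  unfold sw mix
  ext i <;> simp only <;> by_cases h : i ∈ S <;> simp [h]

private lemma sw_sw (S S' : Finset (Fin n))
    (p : ((i : Fin n) → Fin (d i)) × ((i : Fin n) → Fin (d i))) :
    sw S' (sw S p) = sw (S ∆ S') p := by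
  unfold sw mix
  ext i <;> simp only <;> by_cases h : i ∈ S <;> by_cases h' : i ∈ S' <;>
    simp [h, h', Finset.mem_symmDiff]

private lemma card_symmDiff_aux {α : Type*} [DecidableEq α] (A B : Finset α) :
    (A ∆ B).card + 2 * (A ∩ B).card = A.card + B.card := by
  have h1 : (A ∆ B).card = (A \ B).card + (B \ A).card := by
    rw [symmDiff_def]
    exact Finset.card_union_of_disjoint (disjoint_sdiff_sdiff)
  have h2 := Finset.card_sdiff_add_card_inter A B
  have h3 := Finset.card_sdiff_add_card_inter B A
  rw [Finset.inter_comm B A] at h3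
  omega

private lemma neg_one_pow_symmDiff {R : Type*} [Monoid R] [HasDistribNeg R]
    {α : Type*} [DecidableEq α] (A B : Finset α) :
    (-1 : R) ^ (A ∆ B).card = (-1) ^ A.card * (-1) ^ B.card := by
  have h := card_symmDiff_aux A B
  have h2 : (-1 : R) ^ A.card * (-1) ^ B.card = (-1) ^ (A.card + B.card) := (pow_add _ _ _).symm
  rw [h2, ← h, pow_add, pow_mul, neg_one_sq, one_pow, mul_one]

private lemma inter_symmDiff_right {α : Type*} [DecidableEq α] (A B T : Finset α) :
    (A ∆ B) ∩ T = (A ∩ T) ∆ (B ∩ T) := by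
  ext x; simp [Finset.mem_symmDiff]; tauto

private lemma sum_sign_zero (T : Finset (Fin n)) (hT : T.Nonempty) :
    ∑ S : Finset (Fin n), (-1 : ℝ) ^ (S ∩ T).card = 0 := by
  obtain ⟨t, ht⟩ := hT
  have hinv : Function.Involutive (fun S : Finset (Fin n) => S ∆ {t}) :=
    fun S => symmDiff_symmDiff_cancel_right S {t} ▸ (symmDiff_assoc S {t} {t}).trans (by simp)
  have h2 := Equiv.sum_comp hinv.toPerm (fun S : Finset (Fin n) => (-1 : ℝ) ^ (S ∩ T).card)
  have key : ∀ S : Finset (Fin n),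
      (-1 : ℝ) ^ ((S ∆ {t}) ∩ T).card = -(-1 : ℝ) ^ (S ∩ T).card := by
    intro S
    rw [inter_symmDiff_right, Finset.inter_eq_left.mpr (Finset.singleton_subset_iff.mpr ht)]
    rw [neg_one_pow_symmDiff]
    simp
  simp only [Function.Involutive.coe_toPerm] at h2
  simp only [key] at h2
  rw [Finset.sum_neg_distrib] at h2
  linarith

private lemma overlap_eq (ψ : ((i : Fin n) → Fin (d i)) → ℂ) (S : Finset (Fin n)) :
    overlap d S (Matrix.of fun x y => ψ x * (starRingEnd ℂ) (ψ y))
                (Matrix.of fun x y => ψ x * (starRingEnd ℂ) (ψ y)) =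
    ∑ p : ((i : Fin n) → Fin (d i)) × ((i : Fin n) → Fin (d i)),
      (ψ p.1 * ψ p.2) * (starRingEnd ℂ) (ψ (sw S p).1 * ψ (sw S p).2) := by
  classical
  set e := Equiv.piEquivPiSubtypeProd (fun i => i ∈ S) (fun i => Fin (d i)) with he
  set E := Equiv.prodCongr e.symm e.symm with hE
  conv_rhs => rw [← Equiv.sum_comp E (fun p => (ψ p.1 * ψ p.2) *
    (starRingEnd ℂ) (ψ (sw S p).1 * ψ (sw S p).2))]
  unfold overlap Matrix.trace
  simp only [Matrix.diag_apply, Matrix.mul_apply, ptrace, Matrix.of_apply,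
    Finset.sum_mul_sum, Fintype.sum_prod_type, sw]
  refine Finset.sum_congr rfl fun x _ => Eq.trans ?_ Finset.sum_comm
  refine Finset.sum_congr rfl fun y _ =>
    Finset.sum_congr rfl fun z _ => Finset.sum_congr rfl fun w _ => ?_
  have hsymm : ∀ (x : (i : {j // j ∈ S}) → Fin (d i.1)) (z : (i : {j // j ∉ S}) → Fin (d i.1)),
      (e.symm (x, z)) = fun i => if h : i ∈ S then x ⟨i, h⟩ else z ⟨i, h⟩ := fun _ _ => rfl
  have hmix : ∀ (a b : (i : {j // j ∈ S}) → Fin (d i.1))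
      (u v : (i : {j // j ∉ S}) → Fin (d i.1)),
      mix S (fun i => if h : i ∈ S then a ⟨i, h⟩ else u ⟨i, h⟩)
            (fun i => if h : i ∈ S then b ⟨i, h⟩ else v ⟨i, h⟩) =
      fun i => if h : i ∈ S then a ⟨i, h⟩ else v ⟨i, h⟩ := by
    intro a b u v; funext i; by_cases h : i ∈ S <;> simp [mix, h]
  simp only [hE, Equiv.prodCongr_apply, Prod.map_fst, Prod.map_snd, hsymm, hmix, map_mul]
  ring

private lemma shadow_key (ψ : ((i : Fin n) → Fin (d i)) → ℂ) (T : Finset (Fin n)) :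
    (2 ^ n : ℂ) * ∑ S : Finset (Fin n), (-1 : ℂ) ^ (S ∩ T).card *
      (∑ p : ((i : Fin n) → Fin (d i)) × ((i : Fin n) → Fin (d i)),
        (ψ p.1 * ψ p.2) * (starRingEnd ℂ) (ψ (sw S p).1 * ψ (sw S p).2)) =
    ∑ p : ((i : Fin n) → Fin (d i)) × ((i : Fin n) → Fin (d i)),
      (Complex.normSq (∑ S : Finset (Fin n), (-1 : ℂ) ^ (S ∩ T).card *
        (ψ (sw S p).1 * ψ (sw S p).2)) : ℂ) := by
  classical
  set Φ : ((i : Fin n) → Fin (d i)) × ((i : Fin n) → Fin (d i)) → ℂ :=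
    fun p => ψ p.1 * ψ p.2 with hΦ
  set c : Finset (Fin n) → ℂ := fun S => (-1 : ℂ) ^ (S ∩ T).card with hc
  have hconj : ∀ S, (starRingEnd ℂ) (c S) = c S := by
    intro S; simp [hc]
  have hcc : ∀ S U, c S * c (S ∆ U) = c U := by
    intro S U
    simp only [hc, inter_symmDiff_right, neg_one_pow_symmDiff]
    rw [← mul_assoc, ← pow_add, ← two_mul, pow_mul, neg_one_sq, one_pow, one_mul]
  have hns : ∀ p, (Complex.normSq (∑ S : Finset (Fin n), c S * Φ (sw S p)) : ℂ) =
      ∑ S : Finset (Fin n), ∑ S' : Finset (Fin n),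
        c S * c S' * (Φ (sw S p) * (starRingEnd ℂ) (Φ (sw S' p))) := by
    intro p
    rw [← Complex.mul_conj]
    rw [map_sum, Finset.sum_mul_sum]
    refine Finset.sum_congr rfl fun S _ => Finset.sum_congr rfl fun S' _ => ?_
    rw [map_mul, hconj]
    ring
  rw [Finset.sum_congr rfl fun p _ => hns p]
  rw [Finset.sum_comm]
  have step1 : ∀ S : Finset (Fin n),
      (∑ p : ((i : Fin n) → Fin (d i)) × ((i : Fin n) → Fin (d i)),
        ∑ S' : Finset (Fin n), c S * c S' * (Φ (sw S p) * (starRingEnd ℂ) (Φ (sw S' p)))) =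
      ∑ S' : Finset (Fin n), c S' *
        ∑ p : ((i : Fin n) → Fin (d i)) × ((i : Fin n) → Fin (d i)),
          Φ p * (starRingEnd ℂ) (Φ (sw S' p)) := by
    intro S
    have hcc' : ∀ S' : Finset (Fin n), c S * c S' = c (S ∆ S') := by
      intro S'
      rw [← hcc S (S ∆ S'), symmDiff_symmDiff_cancel_left]
    rw [← Equiv.sum_comp (sw_invol S).toPerm
      (fun p => ∑ S' : Finset (Fin n), c S * c S' * (Φ (sw S p) * (starRingEnd ℂ) (Φ (sw S' p))))]
    simp only [Function.Involutive.coe_toPerm]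
    simp only [show ∀ p, sw (d := d) S (sw S p) = p from sw_invol S, sw_sw]
    rw [Finset.sum_comm]
    have hinv2 : Function.Involutive (fun U : Finset (Fin n) => S ∆ U) :=
      fun U => symmDiff_symmDiff_cancel_left (a := S) (b := U)
    refine Eq.trans ?_ (Equiv.sum_comp hinv2.toPerm
      (fun V => c V * ∑ p : ((i : Fin n) → Fin (d i)) × ((i : Fin n) → Fin (d i)),
        Φ p * (starRingEnd ℂ) (Φ (sw V p))))
    simp only [Function.Involutive.coe_toPerm]
    refine Finset.sum_congr rfl fun S' _ => ?_
    rw [Finset.mul_sum]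
    exact Finset.sum_congr rfl fun p _ => by rw [hcc']
  rw [Finset.sum_congr rfl fun S _ => step1 S]
  rw [Finset.sum_const, Finset.card_univ, Fintype.card_finset, Fintype.card_fin, nsmul_eq_mul]
  push_cast
  ring

end Aux

/-- Monogamy inequalities from the shadow inequalities: for a unit vector `ψ` with
`ρ = |ψ⟩⟨ψ|` and concurrence `C_{S|Sᶜ}(ψ)² = 2(1 − Tr(ρ_S²))`, every nonempty `T ⊆ [n]`
satisfies `∑_{S ⊆ [n]} (-1)^(|S ∩ T|) C_{S|Sᶜ}(ψ)² ≤ 0`. -/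
theorem monogamy_inequality {n : ℕ} (d : Fin n → ℕ)
    (ψ : ((i : Fin n) → Fin (d i)) → ℂ)
    (hψ : ∑ x, (starRingEnd ℂ) (ψ x) * ψ x = 1)
    (T : Finset (Fin n)) (hT : T.Nonempty) :
    (∑ S : Finset (Fin n), (-1 : ℝ) ^ (S ∩ T).card *
        (2 * (1 - (overlap d S (Matrix.of fun x y => ψ x * (starRingEnd ℂ) (ψ y))
                              (Matrix.of fun x y => ψ x * (starRingEnd ℂ) (ψ y))).re))) ≤ 0 := by
  classical
  set O : Finset (Fin n) → ℂ := fun S =>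
    overlap d S (Matrix.of fun x y => ψ x * (starRingEnd ℂ) (ψ y))
                (Matrix.of fun x y => ψ x * (starRingEnd ℂ) (ψ y)) with hO
  set X : ℂ := ∑ S : Finset (Fin n), (-1 : ℂ) ^ (S ∩ T).card * O S with hX
  have hkey : (2 ^ n : ℂ) * X =
      ∑ p : ((i : Fin n) → Fin (d i)) × ((i : Fin n) → Fin (d i)),
        (Complex.normSq (∑ S : Finset (Fin n), (-1 : ℂ) ^ (S ∩ T).card *
          (ψ (sw S p).1 * ψ (sw S p).2)) : ℂ) := by
    have hOe : ∀ S : Finset (Fin n), O S =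
        ∑ p : ((i : Fin n) → Fin (d i)) × ((i : Fin n) → Fin (d i)),
          (ψ p.1 * ψ p.2) * (starRingEnd ℂ) (ψ (sw S p).1 * ψ (sw S p).2) :=
      fun S => overlap_eq ψ S
    rw [hX]
    rw [Finset.sum_congr rfl fun S _ => by rw [hOe S]]
    exact shadow_key ψ T
  have hXre : 0 ≤ X.re := by
    have h1 : ((2 ^ n : ℂ) * X).re = 2 ^ n * X.re := by
      rw [show ((2 : ℂ) ^ n) = (((2 ^ n : ℝ) : ℝ) : ℂ) by push_cast; ring,
        Complex.re_ofReal_mul]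
    have h2 : 0 ≤ ((2 ^ n : ℂ) * X).re := by
      rw [hkey, Complex.re_sum]
      refine Finset.sum_nonneg fun p _ => ?_
      simp [Complex.normSq_nonneg]
    rw [h1] at h2
    have hpos : (0 : ℝ) < 2 ^ n := by positivity
    nlinarith
  have hXre' : X.re = ∑ S : Finset (Fin n), (-1 : ℝ) ^ (S ∩ T).card * (O S).re := by
    rw [hX, Complex.re_sum]
    refine Finset.sum_congr rfl fun S _ => ?_
    rw [show ((-1 : ℂ) ^ (S ∩ T).card) = (((-1 : ℝ) ^ (S ∩ T).card : ℝ) : ℂ) by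
      push_cast; ring, Complex.re_ofReal_mul]
  have hexp : ∀ S : Finset (Fin n),
      (-1 : ℝ) ^ (S ∩ T).card * (2 * (1 - (O S).re)) =
      2 * (-1 : ℝ) ^ (S ∩ T).card - 2 * ((-1 : ℝ) ^ (S ∩ T).card * (O S).re) := by
    intro S; ring
  rw [Finset.sum_congr rfl fun S _ => hexp S, Finset.sum_sub_distrib,
    ← Finset.mul_sum, ← Finset.mul_sum, sum_sign_zero T hT, ← hXre']
  linarith
end

section
/- Let ρ be an n-qubit density matrix and define the state inversion ρ̃ = Y^⊗n ρ̄ Y^⊗n (where ρ̄ is the entrywise complex conjugate and Y the Pauli Y matrix). Then ρ̃ = ∑_{S ⊆ [n]} (-1)^|S| ρ_S ⊗ I_{S^c}. -/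
open Finset ComplexOrder

/-- The single-qubit Pauli matrices `I, X, Y, Z`, indexed by `Fin 4`. -/
noncomputable def pauli (j : Fin 4) : Matrix (Fin 2) (Fin 2) ℂ :=
  if j = 0 then 1
  else if j = 1 then !![0, 1; 1, 0]
  else if j = 2 then !![0, -Complex.I; Complex.I, 0]
  else !![1, 0; 0, -1]

/-- The `n`-fold tensor product Pauli string `E_α = e_{α₁} ⊗ ⋯ ⊗ e_{αₙ}`. -/
noncomputable def pauliString {n : ℕ} (α : Fin n → Fin 4) :
    Matrix (Fin n → Fin 2) (Fin n → Fin 2) ℂ :=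
  fun x y => ∏ i, pauli (α i) (x i) (y i)

/-- The support of a Pauli string: positions where the factor is not the identity. -/
def psupp {n : ℕ} (α : Fin n → Fin 4) : Finset (Fin n) :=
  Finset.univ.filter (fun i => α i ≠ 0)

/-- `ρ_S ⊗ I_{Sᶜ}`: the reduced state on `S` tensored with the identity on `Sᶜ`,
reinserted in the correct tensor positions. -/
noncomputable def embedId {n : ℕ} (S : Finset (Fin n))
    (ρ : Matrix (Fin n → Fin 2) (Fin n → Fin 2) ℂ) :
    Matrix (Fin n → Fin 2) (Fin n → Fin 2) ℂ :=
  fun x y => (if ∀ i, i ∉ S → x i = y i then (1 : ℂ) else 0) *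
    ptrace (fun _ => 2) S ρ (fun i => x i.1) (fun i => y i.1)

/-- `Y^{⊗n}`, the `n`-fold tensor power of the Pauli `Y` matrix. -/
noncomputable def Ytens (n : ℕ) : Matrix (Fin n → Fin 2) (Fin n → Fin 2) ℂ :=
  pauliString (fun _ => 2)

/-- The state inversion `ρ̃ = Y^{⊗n} ρ̄ Y^{⊗n}`. -/
noncomputable def stateInversion {n : ℕ}
    (ρ : Matrix (Fin n → Fin 2) (Fin n → Fin 2) ℂ) :
    Matrix (Fin n → Fin 2) (Fin n → Fin 2) ℂ :=
  Ytens n * ρ.map (starRingEnd ℂ) * Ytens n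

noncomputable section
namespace SIE
open Finset

def kd {α : Type*} [DecidableEq α] (u v : α) : ℂ := if u = v then 1 else 0
def yv (u : Fin 2) : ℂ := if u = 0 then -Complex.I else Complex.I
def pp (u v : Fin 2) : ℂ := if u = v then 1 else -1

lemma kd_comm {α : Type*} [DecidableEq α] (u v : α) : kd u v = kd v u := by
  simp [kd, eq_comm]

lemma prod_kd {ι : Type*} [Fintype ι] [DecidableEq ι] (a c : ι → Fin 2) :
    (∏ i, kd (a i) (c i)) = kd a c := by
  by_cases h : a = c
  · subst h; simp [kd]
  · obtain ⟨i, hi⟩ := Function.ne_iff.mp h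
    rw [Finset.prod_eq_zero (Finset.mem_univ i)]
    · simp [kd, h]
    · simp [kd, hi]

lemma sum_kd_mul {ι : Type*} [Fintype ι] [DecidableEq ι] (c : ι) (f : ι → ℂ) :
    ∑ a : ι, kd a c * f a = f c := by
  simp [kd, ite_mul]

lemma sum_indicator_eq {n : ℕ} (S : Finset (Fin n)) (x : Fin n → Fin 2)
    (G : (Fin n → Fin 2) → ℂ) :
    ∑ a : Fin n → Fin 2, (∏ i ∈ S, kd (a i) (x i)) * G a
      = ∑ z : (i : {j : Fin n // j ∉ S}) → Fin 2,
          G (fun i => if h : i ∈ S then x i else z ⟨i, h⟩) := by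
  set e := Equiv.piEquivPiSubtypeProd (fun i : Fin n => i ∈ S) (fun _ => Fin 2) with he
  have key : ∀ (u : (i : {j : Fin n // j ∈ S}) → Fin 2)
      (z : (i : {j : Fin n // j ∉ S}) → Fin 2),
      (∏ i ∈ S, kd ((e.symm (u, z)) i) (x i)) = kd u (fun i => x i.1) := by
    intro u z
    rw [← prod_kd]
    rw [← Finset.prod_attach S (fun i => kd ((e.symm (u, z)) i) (x i)),
      ← Finset.univ_eq_attach]
    refine Finset.prod_congr rfl fun i _ => ?_
    simp [he, Equiv.piEquivPiSubtypeProd, i.2]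
  calc ∑ a : Fin n → Fin 2, (∏ i ∈ S, kd (a i) (x i)) * G a
      = ∑ p : ((i : {j : Fin n // j ∈ S}) → Fin 2) × ((i : {j : Fin n // j ∉ S}) → Fin 2),
          (∏ i ∈ S, kd ((e.symm p) i) (x i)) * G (e.symm p) := by
        rw [Equiv.sum_comp e.symm (fun a => (∏ i ∈ S, kd (a i) (x i)) * G a)]
    _ = ∑ u, ∑ z, kd u (fun i => x i.1) * G (e.symm (u, z)) := by
        rw [Fintype.sum_prod_type]
        exact Finset.sum_congr rfl fun u _ => Finset.sum_congr rfl fun z _ => by rw [key]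
    _ = ∑ z, ∑ u, kd u (fun i => x i.1) * G (e.symm (u, z)) := Finset.sum_comm
    _ = ∑ z, G (e.symm (fun i => x i.1, z)) :=
        Finset.sum_congr rfl fun z _ => sum_kd_mul _ _
    _ = ∑ z : (i : {j : Fin n // j ∉ S}) → Fin 2,
          G (fun i => if h : i ∈ S then x i else z ⟨i, h⟩) := rfl

lemma prod_kd_compl {n : ℕ} (S : Finset (Fin n)) (x y : Fin n → Fin 2) :
    (∏ i ∈ Sᶜ, kd (x i) (y i)) = if ∀ i, i ∉ S → x i = y i then (1:ℂ) else 0 := by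
  by_cases h : ∀ i, i ∉ S → x i = y i
  · rw [if_pos h]
    refine Finset.prod_eq_one fun i hi => ?_
    simp [kd, h i (Finset.mem_compl.mp hi)]
  · rw [if_neg h]
    push_neg at h
    obtain ⟨i, hi, hne⟩ := h
    refine Finset.prod_eq_zero (Finset.mem_compl.mpr hi) ?_
    simp [kd, hne]

lemma embedId_eq {n : ℕ} (S : Finset (Fin n))
    (ρ : Matrix (Fin n → Fin 2) (Fin n → Fin 2) ℂ) (x y : Fin n → Fin 2) :
    embedId S ρ x y = ∑ a : Fin n → Fin 2, ∑ b : Fin n → Fin 2,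
      (∏ i, (if i ∈ S then kd (a i) (x i) * kd (b i) (y i)
        else kd (a i) (b i) * kd (x i) (y i))) * ρ a b := by
  symm
  have hprod : ∀ a b : Fin n → Fin 2,
      (∏ i, (if i ∈ S then kd (a i) (x i) * kd (b i) (y i)
        else kd (a i) (b i) * kd (x i) (y i)))
      = (if ∀ i, i ∉ S → x i = y i then (1:ℂ) else 0) *
        ((∏ i ∈ S, kd (a i) (x i)) *
          (∏ i, kd (b i) (if i ∈ S then y i else a i))) := by
    intro a b
    rw [← Finset.prod_mul_prod_compl S
      (fun i => if i ∈ S then kd (a i) (x i) * kd (b i) (y i)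
        else kd (a i) (b i) * kd (x i) (y i)),
      ← Finset.prod_mul_prod_compl S (fun i => kd (b i) (if i ∈ S then y i else a i)),
      Finset.prod_congr rfl (fun i hi => if_pos hi),
      Finset.prod_congr (rfl : Sᶜ = Sᶜ) (fun i hi => if_neg (Finset.mem_compl.mp hi)),
      Finset.prod_congr rfl (fun i (hi : i ∈ S) => by rw [if_pos hi] :
        ∀ i ∈ S, kd (b i) (if i ∈ S then y i else a i) = kd (b i) (y i)),
      Finset.prod_congr (rfl : Sᶜ = Sᶜ) (fun i hi => by rw [if_neg (Finset.mem_compl.mp hi)] :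
        ∀ i ∈ Sᶜ, kd (b i) (if i ∈ S then y i else a i) = kd (b i) (a i)),
      Finset.prod_mul_distrib, Finset.prod_mul_distrib,
      prod_kd_compl S x y, prod_kd_compl S a b,
      Finset.prod_congr (rfl : Sᶜ = Sᶜ) (fun i _ => kd_comm (b i) (a i)),
      prod_kd_compl S a b]
    ring
  calc ∑ a : Fin n → Fin 2, ∑ b : Fin n → Fin 2,
      (∏ i, (if i ∈ S then kd (a i) (x i) * kd (b i) (y i)
        else kd (a i) (b i) * kd (x i) (y i))) * ρ a b
      = ∑ a : Fin n → Fin 2, (∏ i ∈ S, kd (a i) (x i)) *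
          ((if ∀ i, i ∉ S → x i = y i then (1:ℂ) else 0) *
            ∑ b : Fin n → Fin 2, kd b (fun i => if i ∈ S then y i else a i) * ρ a b) := by
        refine Finset.sum_congr rfl fun a _ => ?_
        rw [Finset.mul_sum, Finset.mul_sum]
        refine Finset.sum_congr rfl fun b _ => ?_
        rw [hprod a b, ← prod_kd b (fun i => if i ∈ S then y i else a i)]
        ring
    _ = ∑ a : Fin n → Fin 2, (∏ i ∈ S, kd (a i) (x i)) *
          ((if ∀ i, i ∉ S → x i = y i then (1:ℂ) else 0) *
            ρ a (fun i => if i ∈ S then y i else a i)) := by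
        refine Finset.sum_congr rfl fun a _ => ?_
        rw [sum_kd_mul]
    _ = (if ∀ i, i ∉ S → x i = y i then (1:ℂ) else 0) *
          ∑ z : (i : {j : Fin n // j ∉ S}) → Fin 2,
            ρ (fun i => if h : i ∈ S then x i else z ⟨i, h⟩)
              (fun i => if h : i ∈ S then y i else z ⟨i, h⟩) := by
        rw [sum_indicator_eq S x (fun a =>
          (if ∀ i, i ∉ S → x i = y i then (1:ℂ) else 0) *
            ρ a (fun i => if i ∈ S then y i else a i)), ← Finset.mul_sum]
        congr 1
        refine Finset.sum_congr rfl fun z _ => ?_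
        congr 1
        funext i
        by_cases h : i ∈ S <;> simp [h]
    _ = embedId S ρ x y := by
        rw [embedId]
        rfl

lemma pauli2_apply (u v : Fin 2) : pauli 2 u v = yv u * kd v (u + 1) := by
  fin_cases u <;> fin_cases v <;> simp [pauli, yv, kd]

lemma yv_mul (u v : Fin 2) : yv u * yv (v + 1) = pp u v := by
  fin_cases u <;> fin_cases v <;> simp [yv, pp]

lemma key_coord (u v w r : Fin 2) :
    kd u v * kd w r - kd u w * kd v r = pp w r * (kd u (r + 1) * kd v (w + 1)) := by
  fin_cases u <;> fin_cases v <;> fin_cases w <;> fin_cases r <;> simp [kd, pp]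

lemma add_one_add_one (u : Fin 2) : u + 1 + 1 = u := by fin_cases u <;> rfl

lemma pflip_eq_iff {n : ℕ} (y b : Fin n → Fin 2) :
    (y = fun i => b i + 1) ↔ (b = fun i => y i + 1) := by
  constructor <;> (rintro rfl; funext i; rw [add_one_add_one])

lemma Ytens_apply {n : ℕ} (x a : Fin n → Fin 2) :
    Ytens n x a = (∏ i, yv (x i)) * kd a (fun i => x i + 1) := by
  rw [Ytens, pauliString]
  rw [show (∏ i, pauli 2 (x i) (a i)) = ∏ i, (yv (x i) * kd (a i) (x i + 1)) from
    Finset.prod_congr rfl fun i _ => pauli2_apply _ _]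
  rw [Finset.prod_mul_distrib, prod_kd]

lemma sum_Ytens_mul {n : ℕ} (x : Fin n → Fin 2) (g : (Fin n → Fin 2) → ℂ) :
    ∑ a : Fin n → Fin 2, Ytens n x a * g a
      = (∏ i, yv (x i)) * g (fun i => x i + 1) := by
  simp only [Ytens_apply, mul_assoc]
  rw [← Finset.mul_sum, sum_kd_mul]

lemma stateInversion_aux {n : ℕ} (ρ : Matrix (Fin n → Fin 2) (Fin n → Fin 2) ℂ)
    (x y : Fin n → Fin 2) :
    stateInversion ρ x y
      = (∏ i, pp (x i) (y i)) *
        (starRingEnd ℂ) (ρ (fun i => x i + 1) (fun i => y i + 1)) := by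
  rw [stateInversion]
  simp only [Matrix.mul_apply, Matrix.map_apply]
  calc ∑ b, (∑ a, Ytens n x a * (starRingEnd ℂ) (ρ a b)) * Ytens n b y
      = ∑ b, ((∏ i, yv (x i)) * (starRingEnd ℂ) (ρ (fun i => x i + 1) b)) * Ytens n b y := by
        refine Finset.sum_congr rfl fun b _ => ?_
        rw [sum_Ytens_mul x (fun a => (starRingEnd ℂ) (ρ a b))]
    _ = ∑ b, kd b (fun i => y i + 1) *
          ((∏ i, yv (x i)) * (∏ i, yv (b i)) * (starRingEnd ℂ) (ρ (fun i => x i + 1) b)) := by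
        refine Finset.sum_congr rfl fun b _ => ?_
        rw [Ytens_apply]
        rw [show kd y (fun i => b i + 1) = kd b (fun i => y i + 1) from by
          simp only [kd]; rw [if_congr (pflip_eq_iff y b) rfl rfl]]
        ring
    _ = (∏ i, yv (x i)) * (∏ i, yv (y i + 1)) *
          (starRingEnd ℂ) (ρ (fun i => x i + 1) (fun i => y i + 1)) := by
        rw [sum_kd_mul]
    _ = (∏ i, pp (x i) (y i)) *
          (starRingEnd ℂ) (ρ (fun i => x i + 1) (fun i => y i + 1)) := by
        rw [← Finset.prod_mul_distrib]
        rw [Finset.prod_congr rfl fun i _ => yv_mul (x i) (y i)]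

lemma sign_sum {n : ℕ} (A B : Fin n → ℂ) :
    ∑ S : Finset (Fin n), (-1:ℂ)^S.card * ∏ i, (if i ∈ S then A i else B i)
      = ∏ i, (B i - A i) := by
  rw [show (∏ i, (B i - A i)) = ∏ i ∈ Finset.univ, (-A i + B i) from
    Finset.prod_congr rfl fun i _ => by ring]
  rw [Finset.prod_add, Finset.powerset_univ]
  refine Finset.sum_congr rfl fun S _ => ?_
  rw [← Finset.compl_eq_univ_sdiff,
    ← Finset.prod_mul_prod_compl S (fun i => if i ∈ S then A i else B i),
    Finset.prod_congr rfl (fun i hi => if_pos hi),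
    Finset.prod_congr (rfl : Sᶜ = Sᶜ) (fun i hi => if_neg (Finset.mem_compl.mp hi)),
    show ∏ i ∈ S, (-A i) = (-1:ℂ)^S.card * ∏ i ∈ S, A i from by
      rw [← Finset.prod_const, ← Finset.prod_mul_distrib]
      exact Finset.prod_congr rfl fun i _ => by ring]
  ring

end SIE
end

open SIE in
/-- For an `n`-qubit density matrix `ρ`, the state inversion satisfies
`ρ̃ = Y^{⊗n} ρ̄ Y^{⊗n} = ∑_{S ⊆ [n]} (-1)^|S| ρ_S ⊗ I_{Sᶜ}`. -/
theorem state_inversion_expansion {n : ℕ}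
    (ρ : Matrix (Fin n → Fin 2) (Fin n → Fin 2) ℂ) (hρ : IsDensity ρ) :
    stateInversion ρ = ∑ S : Finset (Fin n), (-1 : ℂ) ^ S.card • embedId S ρ := by
  ext x y
  rw [stateInversion_aux ρ x y]
  have herm : (starRingEnd ℂ) (ρ (fun i => x i + 1) (fun i => y i + 1))
      = ρ (fun i => y i + 1) (fun i => x i + 1) := by
    calc (starRingEnd ℂ) (ρ (fun i => x i + 1) (fun i => y i + 1))
        = ρ.conjTranspose (fun i => y i + 1) (fun i => x i + 1) :=
          (Matrix.conjTranspose_apply ρ _ _).symm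
      _ = ρ (fun i => y i + 1) (fun i => x i + 1) := by rw [hρ.1.1]
  rw [herm]
  rw [show (∑ S : Finset (Fin n), (-1 : ℂ) ^ S.card • embedId S ρ) x y
      = ∑ S : Finset (Fin n), (-1 : ℂ) ^ S.card * embedId S ρ x y from by
    simp [Matrix.sum_apply]]
  symm
  calc ∑ S : Finset (Fin n), (-1 : ℂ) ^ S.card * embedId S ρ x y
      = ∑ S : Finset (Fin n), ∑ a : Fin n → Fin 2, ∑ b : Fin n → Fin 2,
          ((-1 : ℂ) ^ S.card * ∏ i, (if i ∈ S then kd (a i) (x i) * kd (b i) (y i)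
            else kd (a i) (b i) * kd (x i) (y i))) * ρ a b := by
        refine Finset.sum_congr rfl fun S _ => ?_
        rw [embedId_eq, Finset.mul_sum]
        refine Finset.sum_congr rfl fun a _ => ?_
        rw [Finset.mul_sum]
        exact Finset.sum_congr rfl fun b _ => by ring
    _ = ∑ a : Fin n → Fin 2, ∑ b : Fin n → Fin 2,
          (∑ S : Finset (Fin n), (-1 : ℂ) ^ S.card *
            ∏ i, (if i ∈ S then kd (a i) (x i) * kd (b i) (y i)
              else kd (a i) (b i) * kd (x i) (y i))) * ρ a b := by
        rw [Finset.sum_comm]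
        refine Finset.sum_congr rfl fun a _ => ?_
        rw [Finset.sum_comm]
        refine Finset.sum_congr rfl fun b _ => ?_
        rw [Finset.sum_mul]
    _ = ∑ a : Fin n → Fin 2, ∑ b : Fin n → Fin 2,
          ((∏ i, pp (x i) (y i)) * (kd a (fun i => y i + 1) * kd b (fun i => x i + 1)))
            * ρ a b := by
        refine Finset.sum_congr rfl fun a _ => Finset.sum_congr rfl fun b _ => ?_
        rw [sign_sum (fun i => kd (a i) (x i) * kd (b i) (y i))
          (fun i => kd (a i) (b i) * kd (x i) (y i))]
        congr 1
        rw [show (∏ i, (kd (a i) (b i) * kd (x i) (y i) - kd (a i) (x i) * kd (b i) (y i)))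
            = ∏ i, (pp (x i) (y i) * (kd (a i) (y i + 1) * kd (b i) (x i + 1))) from
          Finset.prod_congr rfl fun i _ => key_coord (a i) (b i) (x i) (y i)]
        rw [Finset.prod_mul_distrib, Finset.prod_mul_distrib, prod_kd, prod_kd]
    _ = (∏ i, pp (x i) (y i)) * ρ (fun i => y i + 1) (fun i => x i + 1) := by
        have hstep : ∀ a : Fin n → Fin 2, (∑ b : Fin n → Fin 2,
            ((∏ i, pp (x i) (y i)) * (kd a (fun i => y i + 1) * kd b (fun i => x i + 1)))
              * ρ a b)
            = kd a (fun i => y i + 1) * ((∏ i, pp (x i) (y i)) *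
                ∑ b : Fin n → Fin 2, kd b (fun i => x i + 1) * ρ a b) := fun a => by
          rw [Finset.mul_sum, Finset.mul_sum]
          exact Finset.sum_congr rfl fun b _ => by ring
        rw [Finset.sum_congr rfl fun a _ => hstep a,
          sum_kd_mul (fun i => y i + 1) (fun a => (∏ i, pp (x i) (y i)) *
            ∑ b : Fin n → Fin 2, kd b (fun i => x i + 1) * ρ a b),
          sum_kd_mul]
end

section
/- For an n-qubit state ρ and any subset T ⊆ [n], ∑_{E_α ∈ E_2, supp(E_α) = T} E_α ρ E_α = ∑_{R ⊆ T} (-1)^(|T\R|) · 2^|R| · ρ_{R^c} ⊗ I_R. -/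
open Finset ComplexOrder

section PauliTwirlAux

variable {n : ℕ}

lemma pauli_sum' (x u v y : Fin 2) :
    ∑ j : Fin 4, pauli j x u * pauli j v y
      = 2 * (if x = y then (1:ℂ) else 0) * (if u = v then 1 else 0) := by
  fin_cases x <;> fin_cases u <;> fin_cases v <;> fin_cases y <;>
    simp [pauli, Fin.sum_univ_four, Matrix.one_apply] <;> ring_nf

lemma filter_psupp_subset' (T : Finset (Fin n)) :
    univ.filter (fun α : Fin n → Fin 4 => psupp α ⊆ T)
      = Fintype.piFinset (fun i => if i ∈ T then (univ : Finset (Fin 4)) else {0}) := by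
  ext α
  simp only [mem_filter, mem_univ, true_and, Fintype.mem_piFinset]
  constructor
  · intro h i
    by_cases hi : i ∈ T
    · simp [hi]
    · simp only [hi, if_false, mem_singleton]
      by_contra hne
      exact hi (h (by simp [psupp, hne]))
  · intro h i hi
    simp only [psupp, mem_filter, mem_univ, true_and] at hi
    have := h i
    by_contra hiT
    rw [if_neg hiT] at this
    simp at this
    exact hi this

lemma core_sum' (ρ : Matrix (Fin n → Fin 2) (Fin n → Fin 2) ℂ)
    (T : Finset (Fin n)) (x y : Fin n → Fin 2) :
    ∑ u : Fin n → Fin 2, ∑ v : Fin n → Fin 2,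
      ρ u v * ((if ∀ i ∈ T, u i = v i then (1:ℂ) else 0) *
        ((if ∀ i ∈ Tᶜ, x i = u i then (1:ℂ) else 0) *
          (if ∀ i ∈ Tᶜ, v i = y i then (1:ℂ) else 0)))
    = ∑ z : (i : {j : Fin n // j ∉ Tᶜ}) → Fin 2,
        ρ (fun i => if h : i ∈ Tᶜ then x i else z ⟨i, h⟩)
          (fun i => if h : i ∈ Tᶜ then y i else z ⟨i, h⟩) := by
  have hv : ∀ u : Fin n → Fin 2, ∑ v : Fin n → Fin 2,
      ρ u v * ((if ∀ i ∈ T, u i = v i then (1:ℂ) else 0) *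
        ((if ∀ i ∈ Tᶜ, x i = u i then (1:ℂ) else 0) *
          (if ∀ i ∈ Tᶜ, v i = y i then (1:ℂ) else 0)))
      = (if ∀ i ∈ Tᶜ, x i = u i then (1:ℂ) else 0) *
          ρ u (fun i => if i ∈ Tᶜ then y i else u i) := by
    intro u
    rw [Fintype.sum_eq_single (fun i => if i ∈ Tᶜ then y i else u i)]
    · have h1 : (∀ i ∈ T, u i = if i ∈ Tᶜ then y i else u i) := fun i hi => by
        simp [Finset.mem_compl, hi]
      have h2 : (∀ i ∈ Tᶜ, (if i ∈ Tᶜ then y i else u i) = y i) := fun i hi => by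
        simp [hi]
      rw [if_pos h1, if_pos h2]; ring
    · intro v hvne
      by_cases hA : ∀ i ∈ T, u i = v i
      · by_cases hC : ∀ i ∈ Tᶜ, v i = y i
        · exact absurd (funext fun i => by
            by_cases hi : i ∈ Tᶜ
            · rw [if_pos hi]; exact hC i hi
            · rw [if_neg hi]; exact (hA i (by simpa using hi)).symm) hvne
        · rw [if_neg hC]; ring
      · rw [if_neg hA]; ring
  simp only [hv]
  have := Equiv.sum_comp (Equiv.piEquivPiSubtypeProd (fun i : Fin n => i ∉ Tᶜ)
      (fun _ => Fin 2)).symm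
    (fun u : Fin n → Fin 2 => (if ∀ i ∈ Tᶜ, x i = u i then (1:ℂ) else 0) *
        ρ u (fun i => if i ∈ Tᶜ then y i else u i))
  rw [← this, Fintype.sum_prod_type]
  refine Finset.sum_congr rfl fun z _ => ?_
  rw [Fintype.sum_eq_single (fun i : {j : Fin n // ¬ j ∉ Tᶜ} => x i.1)]
  · have e1 : (Equiv.piEquivPiSubtypeProd (fun i : Fin n => i ∉ Tᶜ)
        (fun _ => Fin 2)).symm (z, fun i => x i.1)
        = (fun i => if h : i ∈ Tᶜ then x i else z ⟨i, h⟩) := by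
      funext i
      by_cases hi : i ∈ Tᶜ <;>
        simp [Equiv.piEquivPiSubtypeProd_symm_apply, hi]
    rw [e1]
    have hB : ∀ i ∈ Tᶜ, x i = (fun i => if h : i ∈ Tᶜ then x i else z ⟨i, h⟩) i :=
      fun i hi => by simp [hi]
    rw [if_pos hB]
    have hvv : (fun i : Fin n => if i ∈ Tᶜ then y i
          else (fun i => if h : i ∈ Tᶜ then x i else z ⟨i, h⟩) i)
        = (fun i => if h : i ∈ Tᶜ then y i else z ⟨i, h⟩) := by
      funext i; by_cases hi : i ∈ Tᶜ <;> simp [hi]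
    rw [hvv, one_mul]
  · intro a hane
    simp only [Equiv.piEquivPiSubtypeProd_symm_apply]
    rw [if_neg, zero_mul]
    intro hB
    apply hane
    funext i
    have hi : i.1 ∈ Tᶜ := not_not.mp i.2
    have := hB i.1 hi
    rw [dif_neg i.2] at this
    rw [← this]

lemma twirl_subset' (ρ : Matrix (Fin n → Fin 2) (Fin n → Fin 2) ℂ)
    (T : Finset (Fin n)) :
    ∑ α ∈ univ.filter (fun α : Fin n → Fin 4 => psupp α ⊆ T),
        pauliString α * ρ * pauliString α
      = ((2 : ℂ) ^ T.card) • embedId Tᶜ ρ := by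
  have hfT : univ.filter (fun i : Fin n => i ∈ T) = T := by ext i; simp
  have hfTc : univ.filter (fun i : Fin n => ¬ i ∈ T) = Tᶜ := by ext i; simp
  ext x y
  rw [Matrix.sum_apply]
  have hα : ∀ α : Fin n → Fin 4, (pauliString α * ρ * pauliString α) x y
      = ∑ u : Fin n → Fin 2, ∑ v : Fin n → Fin 2,
          ρ u v * ∏ i, (pauli (α i) (x i) (u i) * pauli (α i) (v i) (y i)) := by
    intro α
    simp only [Matrix.mul_apply, pauliString, Finset.sum_mul]
    rw [Finset.sum_comm]
    refine Finset.sum_congr rfl fun u _ => Finset.sum_congr rfl fun v _ => ?_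
    rw [Finset.prod_mul_distrib]; ring
  simp only [hα]
  rw [Finset.sum_comm]
  have swap2 : ∀ u : Fin n → Fin 2,
      (∑ α ∈ univ.filter (fun α : Fin n → Fin 4 => psupp α ⊆ T),
        ∑ v : Fin n → Fin 2,
          ρ u v * ∏ i, (pauli (α i) (x i) (u i) * pauli (α i) (v i) (y i)))
      = ∑ v : Fin n → Fin 2, ρ u v *
          ((2:ℂ) ^ T.card *
            ((if ∀ i ∈ T, x i = y i then (1:ℂ) else 0) *
            ((if ∀ i ∈ T, u i = v i then (1:ℂ) else 0) *
            ((if ∀ i ∈ Tᶜ, x i = u i then (1:ℂ) else 0) *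
             (if ∀ i ∈ Tᶜ, v i = y i then (1:ℂ) else 0))))) := by
    intro u
    rw [Finset.sum_comm]
    refine Finset.sum_congr rfl fun v _ => ?_
    rw [← Finset.mul_sum]
    congr 1
    rw [filter_psupp_subset',
      ← Finset.prod_univ_sum (fun i : Fin n => if i ∈ T then (univ : Finset (Fin 4)) else {0})
        (fun i j => pauli j (x i) (u i) * pauli j (v i) (y i))]
    have hsite : ∀ i : Fin n,
        (∑ j ∈ (if i ∈ T then (univ : Finset (Fin 4)) else {0}),
          pauli j (x i) (u i) * pauli j (v i) (y i))
        = if i ∈ T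
            then 2 * (if x i = y i then (1:ℂ) else 0) * (if u i = v i then 1 else 0)
            else (if x i = u i then (1:ℂ) else 0) * (if v i = y i then 1 else 0) := by
      intro i
      by_cases hi : i ∈ T
      · rw [if_pos hi, if_pos hi, pauli_sum']
      · rw [if_neg hi, if_neg hi, Finset.sum_singleton]
        simp [pauli, Matrix.one_apply]
    calc ∏ i : Fin n, ∑ j ∈ (if i ∈ T then (univ : Finset (Fin 4)) else {0}),
            pauli j (x i) (u i) * pauli j (v i) (y i)
        = ∏ i : Fin n, (if i ∈ T
            then 2 * (if x i = y i then (1:ℂ) else 0) * (if u i = v i then 1 else 0)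
            else (if x i = u i then (1:ℂ) else 0) * (if v i = y i then 1 else 0)) :=
          Finset.prod_congr rfl fun i _ => hsite i
      _ = (∏ i ∈ T, 2 * (if x i = y i then (1:ℂ) else 0) * (if u i = v i then 1 else 0)) *
          ∏ i ∈ Tᶜ, (if x i = u i then (1:ℂ) else 0) * (if v i = y i then 1 else 0) := by
          rw [Finset.prod_ite, hfT, hfTc]
      _ = _ := by
          rw [Finset.prod_mul_distrib, Finset.prod_mul_distrib, Finset.prod_mul_distrib,
            Finset.prod_const, Finset.prod_boole, Finset.prod_boole, Finset.prod_boole,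
            Finset.prod_boole]
          ring
  simp only [swap2]
  have factor : ∑ u : Fin n → Fin 2, ∑ v : Fin n → Fin 2, ρ u v *
          ((2:ℂ) ^ T.card *
            ((if ∀ i ∈ T, x i = y i then (1:ℂ) else 0) *
            ((if ∀ i ∈ T, u i = v i then (1:ℂ) else 0) *
            ((if ∀ i ∈ Tᶜ, x i = u i then (1:ℂ) else 0) *
             (if ∀ i ∈ Tᶜ, v i = y i then (1:ℂ) else 0)))))
      = (2:ℂ) ^ T.card * ((if ∀ i ∈ T, x i = y i then (1:ℂ) else 0) *
          ∑ u : Fin n → Fin 2, ∑ v : Fin n → Fin 2,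
            ρ u v * ((if ∀ i ∈ T, u i = v i then (1:ℂ) else 0) *
              ((if ∀ i ∈ Tᶜ, x i = u i then (1:ℂ) else 0) *
               (if ∀ i ∈ Tᶜ, v i = y i then (1:ℂ) else 0)))) := by
    simp only [Finset.mul_sum]
    refine Finset.sum_congr rfl fun u _ => Finset.sum_congr rfl fun v _ => ?_
    ring
  rw [factor, core_sum']
  simp only [Matrix.smul_apply, embedId, ptrace, smul_eq_mul]
  congr 1
  congr 1
  · refine if_congr ?_ rfl rfl
    simp [Finset.mem_compl]

lemma sum_ie' (S T : Finset (Fin n)) (hS : S ⊆ T) :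
    ∑ R ∈ T.powerset, (if S ⊆ R then ((-1:ℂ)) ^ ((T \ R).card) else 0)
      = if S = T then 1 else 0 := by
  rw [Finset.sum_ite, Finset.sum_const_zero, add_zero]
  have h1 : ∑ R ∈ T.powerset.filter (fun R => S ⊆ R), ((-1:ℂ)) ^ ((T \ R).card)
      = ∑ U ∈ (T \ S).powerset, ((-1:ℂ)) ^ U.card := by
    refine Finset.sum_nbij' (fun R => T \ R) (fun U => T \ U) ?_ ?_ ?_ ?_ ?_
    · intro R hR
      simp only [mem_filter, mem_powerset] at hR ⊢
      exact sdiff_subset_sdiff Subset.rfl hR.2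
    · intro U hU
      simp only [mem_filter, mem_powerset] at hU ⊢
      refine ⟨sdiff_subset, ?_⟩
      intro a ha
      simp only [mem_sdiff]
      refine ⟨hS ha, fun haU => (mem_sdiff.mp (hU haU)).2 ha⟩
    · intro R hR
      simp only [mem_filter, mem_powerset] at hR
      exact Finset.sdiff_sdiff_eq_self hR.1
    · intro U hU
      simp only [mem_powerset] at hU
      exact Finset.sdiff_sdiff_eq_self (hU.trans sdiff_subset)
    · intro R _; rfl
  rw [h1]
  have h2 := Finset.sum_powerset_neg_one_pow_card (x := T \ S)
  have h3 : ∑ U ∈ (T \ S).powerset, ((-1:ℂ)) ^ U.card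
      = ((∑ U ∈ (T \ S).powerset, ((-1:ℤ)) ^ U.card : ℤ) : ℂ) := by
    push_cast; rfl
  rw [h3, h2]
  by_cases h : S = T
  · simp [h]
  · have : T \ S ≠ ∅ := by
      rw [Ne, Finset.sdiff_eq_empty_iff_subset]
      exact fun hT => h (Finset.Subset.antisymm hS hT)
    simp [h, this]

lemma fiberwise' {M : Type*} [AddCommMonoid M] (R : Finset (Fin n))
    (F : (Fin n → Fin 4) → M) :
    ∑ α ∈ univ.filter (fun α : Fin n → Fin 4 => psupp α ⊆ R), F α
      = ∑ S ∈ R.powerset, ∑ α ∈ univ.filter (fun α : Fin n → Fin 4 => psupp α = S), F α := by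
  rw [← Finset.sum_fiberwise_of_maps_to (g := psupp) (t := R.powerset)
    (fun α hα => by simpa [mem_powerset] using (mem_filter.mp hα).2) F]
  refine Finset.sum_congr rfl fun S hS => ?_
  congr 1
  ext α
  simp only [mem_filter, mem_univ, true_and]
  constructor
  · exact fun h => h.2
  · intro h
    exact ⟨by rw [h]; exact mem_powerset.mp hS, h⟩

end PauliTwirlAux

/-- Inclusion–exclusion form of the Pauli twirl: for an `n`-qubit state `ρ` and `T ⊆ [n]`,
`∑_{supp(E_α) = T} E_α ρ E_α = ∑_{R ⊆ T} (-1)^(|T\R|) 2^|R| · ρ_{Rᶜ} ⊗ I_R`. -/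
theorem pauli_twirl_exact {n : ℕ}
    (ρ : Matrix (Fin n → Fin 2) (Fin n → Fin 2) ℂ) (hρ : IsDensity ρ)
    (T : Finset (Fin n)) :
    (∑ α ∈ Finset.univ.filter (fun α : Fin n → Fin 4 => psupp α = T),
        pauliString α * ρ * pauliString α) =
      ∑ R ∈ T.powerset, ((-1 : ℂ) ^ ((T \ R).card) * 2 ^ R.card) • embedId Rᶜ ρ := by
  symm
  calc ∑ R ∈ T.powerset, ((-1 : ℂ) ^ ((T \ R).card) * 2 ^ R.card) • embedId Rᶜ ρ
      = ∑ R ∈ T.powerset, ∑ S ∈ T.powerset,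
          (if S ⊆ R then ((-1:ℂ) ^ ((T \ R).card)) •
            (∑ α ∈ Finset.univ.filter (fun α : Fin n → Fin 4 => psupp α = S),
              pauliString α * ρ * pauliString α) else 0) := by
        refine Finset.sum_congr rfl fun R hR => ?_
        rw [mul_smul, ← twirl_subset', fiberwise' R, Finset.smul_sum,
          show R.powerset = T.powerset.filter (fun S => S ⊆ R) from by
            ext S
            simp only [mem_powerset, mem_filter]
            exact ⟨fun h => ⟨h.trans (mem_powerset.mp hR), h⟩, fun h => h.2⟩,
          Finset.sum_filter]
    _ = ∑ S ∈ T.powerset,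
          (∑ R ∈ T.powerset, if S ⊆ R then ((-1:ℂ) ^ ((T \ R).card)) else 0) •
            (∑ α ∈ Finset.univ.filter (fun α : Fin n → Fin 4 => psupp α = S),
              pauliString α * ρ * pauliString α) := by
        rw [Finset.sum_comm]
        refine Finset.sum_congr rfl fun S _ => ?_
        rw [Finset.sum_smul]
        refine Finset.sum_congr rfl fun R _ => ?_
        by_cases h : S ⊆ R <;> simp [h]
    _ = _ := by
        rw [Finset.sum_congr rfl (fun S hS => by rw [sum_ie' S T (mem_powerset.mp hS)])]
        simp only [ite_smul, one_smul, zero_smul]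
        rw [Finset.sum_ite_eq' T.powerset T]
        simp
end

section
/- For an n-qubit state ρ and T ⊆ [n], ∑_{E_α ∈ E_2, supp(E_α) = T} Tr(ρ E_α ρ̃ E_α) = ∑_{S ⊆ [n]} (-1)^(|S ∩ T^c|) Tr(ρ_S²), where ρ̃ = Y^⊗n ρ̄ Y^⊗n is the state inversion. In other words, the two definitions of the shadow enumerator s_T(ρ,ρ) coincide for n-qubit states. -/
open Finset ComplexOrder

/-! ### Auxiliary lemmas -/

lemma pauliString_mul {n : ℕ} (α β : Fin n → Fin 4) (x y : Fin n → Fin 2) :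
    (pauliString α * pauliString β) x y = ∏ i, (pauli (α i) * pauli (β i)) (x i) (y i) := by
  simp only [pauliString, Matrix.mul_apply]
  conv_rhs => rw [Finset.prod_univ_sum]
  rw [Fintype.piFinset_univ]
  exact Finset.sum_congr rfl fun z _ => (Finset.prod_mul_distrib).symm

lemma trace4 {m : Type*} [Fintype m] (A B C D : Matrix m m ℂ) :
    (A * B * C * D).trace = ∑ x, ∑ w, ∑ z, ∑ y, A x y * B y z * C z w * D w x := by
  simp only [Matrix.trace, Matrix.diag, Matrix.mul_apply, Finset.sum_mul]

/-- The local "left" kernel. -/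
noncomputable def fL (j : Fin 4) (x y u v : Fin 2) : ℂ :=
  (pauli j * pauli 2) y v * (pauli 2 * pauli j) u x

lemma kernelF (x y u v : Fin 2) :
    fL 0 x y u v =
      (-1) * ((if x = v then (1:ℂ) else 0) * (if y = u then (1:ℂ) else 0)) +
        (if x = y then (1:ℂ) else 0) * (if u = v then (1:ℂ) else 0) := by
  fin_cases x <;> fin_cases y <;> fin_cases u <;> fin_cases v <;>
    simp [fL, pauli, Matrix.mul_apply, Fin.sum_univ_two]

lemma kernelT (x y u v : Fin 2) :
    (∑ j ∈ ({1,2,3} : Finset (Fin 4)), fL j x y u v) =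
      (1:ℂ) * ((if x = v then (1:ℂ) else 0) * (if y = u then (1:ℂ) else 0)) +
        (if x = y then (1:ℂ) else 0) * (if u = v then (1:ℂ) else 0) := by
  rw [show ({1,2,3} : Finset (Fin 4)) = {1} ∪ {2} ∪ {3} by decide]
  fin_cases x <;> fin_cases y <;> fin_cases u <;> fin_cases v <;>
    simp [fL, pauli, Matrix.mul_apply, Fin.sum_univ_two, Finset.sum_union]

lemma kernel (t : Prop) [Decidable t] (x y u v : Fin 2) :
    (∑ j ∈ (if t then ({1,2,3} : Finset (Fin 4)) else {0}), fL j x y u v) =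
      (if t then (1:ℂ) else -1) * ((if x = v then (1:ℂ) else 0) * (if y = u then (1:ℂ) else 0)) +
        (if x = y then (1:ℂ) else 0) * (if u = v then (1:ℂ) else 0) := by
  by_cases h : t
  · simp only [h, if_true]; exact kernelT x y u v
  · simp only [h, if_false]; rw [Finset.sum_singleton]; exact kernelF x y u v

lemma filter_psupp {n : ℕ} (T : Finset (Fin n)) :
    Finset.univ.filter (fun α : Fin n → Fin 4 => psupp α = T) =
      Fintype.piFinset (fun i => if i ∈ T then ({1,2,3} : Finset (Fin 4)) else {0}) := by
  ext α
  simp only [Finset.mem_filter, Finset.mem_univ, true_and, Fintype.mem_piFinset]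
  rw [Finset.ext_iff]
  refine forall_congr' fun i => ?_
  simp only [psupp, Finset.mem_filter, Finset.mem_univ, true_and]
  by_cases h : i ∈ T <;> simp [h] <;> generalize α i = j <;> fin_cases j <;> decide

lemma lhs_trace {n : ℕ} (ρ : Matrix (Fin n → Fin 2) (Fin n → Fin 2) ℂ)
    (hH : ρ.IsHermitian) (α : Fin n → Fin 4) :
    (ρ * pauliString α * stateInversion ρ * pauliString α).trace =
      ∑ x, ∑ y, ∑ u, ∑ v, ρ x y * ρ u v *
        ∏ i, fL (α i) (x i) (y i) (u i) (v i) := by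
  have hsplit : ρ * pauliString α * stateInversion ρ * pauliString α =
      ρ * (pauliString α * Ytens n) * ρ.map (starRingEnd ℂ) * (Ytens n * pauliString α) := by
    simp only [stateInversion, Matrix.mul_assoc]
  rw [hsplit, trace4]
  refine Finset.sum_congr rfl fun x _ => ?_
  rw [show (∑ w, ∑ z, ∑ y, ρ x y * (pauliString α * Ytens n) y z *
        ρ.map (starRingEnd ℂ) z w * (Ytens n * pauliString α) w x)
      = ∑ w, ∑ y, ∑ z, ρ x y * (pauliString α * Ytens n) y z *
        ρ.map (starRingEnd ℂ) z w * (Ytens n * pauliString α) w x from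
    Finset.sum_congr rfl fun w _ => Finset.sum_comm, Finset.sum_comm]
  refine Finset.sum_congr rfl fun y _ => Finset.sum_congr rfl fun u _ =>
    Finset.sum_congr rfl fun v _ => ?_
  have h1 : (pauliString α * Ytens n) y v = ∏ i, (pauli (α i) * pauli 2) (y i) (v i) :=
    pauliString_mul α (fun _ => 2) y v
  have h2 : (Ytens n * pauliString α) u x = ∏ i, (pauli 2 * pauli (α i)) (u i) (x i) :=
    pauliString_mul (fun _ => 2) α u x
  have h3 : ρ.map (starRingEnd ℂ) v u = ρ u v := by
    rw [Matrix.map_apply]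
    conv_rhs => rw [← hH.apply u v]
    rfl
  rw [h1, h2, h3]
  rw [show (∏ i, fL (α i) (x i) (y i) (u i) (v i))
      = (∏ i, (pauli (α i) * pauli 2) (y i) (v i)) *
        ∏ i, (pauli 2 * pauli (α i)) (u i) (x i) from by
    rw [← Finset.prod_mul_distrib]; rfl]
  ring

lemma overlap_eq_s16 {n : ℕ} (S : Finset (Fin n))
    (ρ : Matrix (Fin n → Fin 2) (Fin n → Fin 2) ℂ) :
    overlap (fun _ => 2) S ρ ρ =
      ∑ x : Fin n → Fin 2, ∑ u : Fin n → Fin 2,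
        ρ x (S.piecewise u x) * ρ u (S.piecewise x u) := by
  classical
  set e := (Equiv.piEquivPiSubtypeProd (fun i => i ∈ S) (fun _ => Fin 2)).symm with he
  set m : ({j : Fin n // j ∈ S} → Fin 2) → ({j : Fin n // j ∉ S} → Fin 2) →
      (Fin n → Fin 2) := fun a b => fun i => if h : i ∈ S then a ⟨i, h⟩ else b ⟨i, h⟩ with hm
  have hme : ∀ a b, e (a, b) = m a b := fun a b => rfl
  have h1 : ∀ g : (Fin n → Fin 2) → ℂ, ∑ x, g x = ∑ p, ∑ z, g (m p z) := by
    intro g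
    rw [← Equiv.sum_comp e g, Fintype.sum_prod_type]
    rfl
  have hpc1 : ∀ p z q w, S.piecewise (m q w) (m p z) = m q z := by
    intro p z q w; funext i; by_cases h : i ∈ S <;> simp [Finset.piecewise, hm, h]
  calc overlap (fun _ => 2) S ρ ρ
      = ∑ p, ∑ q, ∑ w, ∑ z, ρ (m p z) (m q z) * ρ (m q w) (m p w) := by
        simp only [overlap, Matrix.trace, Matrix.diag, Matrix.mul_apply, ptrace,
          Finset.sum_mul, Finset.mul_sum, hm]
    _ = ∑ p, ∑ z, ∑ q, ∑ w, ρ (m p z) (m q z) * ρ (m q w) (m p w) := by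
        refine Finset.sum_congr rfl fun p _ => ?_
        rw [show (∑ q, ∑ w, ∑ z, ρ (m p z) (m q z) * ρ (m q w) (m p w))
            = ∑ q, ∑ z, ∑ w, ρ (m p z) (m q z) * ρ (m q w) (m p w) from
          Finset.sum_congr rfl fun q _ => Finset.sum_comm, Finset.sum_comm]
    _ = ∑ x : Fin n → Fin 2, ∑ u : Fin n → Fin 2,
        ρ x (S.piecewise u x) * ρ u (S.piecewise x u) := by
        rw [h1 (fun x => ∑ u, ρ x (S.piecewise u x) * ρ u (S.piecewise x u))]
        refine Finset.sum_congr rfl fun p _ => Finset.sum_congr rfl fun z _ => ?_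
        rw [h1 (fun u => ρ (m p z) (S.piecewise u (m p z)) * ρ u (S.piecewise (m p z) u))]
        refine Finset.sum_congr rfl fun q _ => Finset.sum_congr rfl fun w _ => ?_
        rw [hpc1 p z q w, hpc1 q w p z]

lemma collapse {n : ℕ} (S : Finset (Fin n))
    (ρ : Matrix (Fin n → Fin 2) (Fin n → Fin 2) ℂ) :
    (∑ x : Fin n → Fin 2, ∑ y : Fin n → Fin 2, ∑ u : Fin n → Fin 2, ∑ v : Fin n → Fin 2,
      ρ x y * ρ u v *
        (((if ∀ i ∈ S, x i = v i then (1:ℂ) else 0) * (if ∀ i ∈ S, y i = u i then (1:ℂ) else 0)) *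
         ((if ∀ i ∈ univ \ S, x i = y i then (1:ℂ) else 0) *
          (if ∀ i ∈ univ \ S, u i = v i then (1:ℂ) else 0)))) =
      ∑ x : Fin n → Fin 2, ∑ u : Fin n → Fin 2,
        ρ x (S.piecewise u x) * ρ u (S.piecewise x u) := by
  classical
  have hind : ∀ (x u v : Fin n → Fin 2),
      ((if ∀ i ∈ S, x i = v i then (1:ℂ) else 0) *
        (if ∀ i ∈ univ \ S, u i = v i then (1:ℂ) else 0)) =
      if v = S.piecewise x u then 1 else 0 := by
    intro x u v
    by_cases h1 : ∀ i ∈ S, x i = v i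
    · by_cases h2 : ∀ i ∈ univ \ S, u i = v i
      · have : v = S.piecewise x u := by
          funext i
          by_cases hi : i ∈ S
          · rw [Finset.piecewise_eq_of_mem _ _ _ hi, ← h1 i hi]
          · rw [Finset.piecewise_eq_of_notMem _ _ _ hi,
              ← h2 i (Finset.mem_sdiff.2 ⟨Finset.mem_univ i, hi⟩)]
        rw [if_pos h1, if_pos h2, if_pos this, mul_one]
      · have : v ≠ S.piecewise x u := by
          intro hv
          exact h2 fun i hi => by
            rw [hv, Finset.piecewise_eq_of_notMem _ _ _ (Finset.mem_sdiff.1 hi).2]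
        rw [if_pos h1, if_neg h2, mul_zero, if_neg this]
    · have : v ≠ S.piecewise x u := by
        intro hv
        exact h1 fun i hi => by rw [hv, Finset.piecewise_eq_of_mem _ _ _ hi]
      rw [if_neg h1, zero_mul, if_neg this]
  have hind2 : ∀ (x u y : Fin n → Fin 2),
      ((if ∀ i ∈ S, y i = u i then (1:ℂ) else 0) *
        (if ∀ i ∈ univ \ S, x i = y i then (1:ℂ) else 0)) =
      if y = S.piecewise u x then 1 else 0 := by
    intro x u y
    by_cases h1 : ∀ i ∈ S, y i = u i
    · by_cases h2 : ∀ i ∈ univ \ S, x i = y i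
      · have : y = S.piecewise u x := by
          funext i
          by_cases hi : i ∈ S
          · rw [Finset.piecewise_eq_of_mem _ _ _ hi, h1 i hi]
          · rw [Finset.piecewise_eq_of_notMem _ _ _ hi,
              h2 i (Finset.mem_sdiff.2 ⟨Finset.mem_univ i, hi⟩)]
        rw [if_pos h1, if_pos h2, if_pos this, mul_one]
      · have : y ≠ S.piecewise u x := by
          intro hv
          exact h2 fun i hi => by
            rw [hv, Finset.piecewise_eq_of_notMem _ _ _ (Finset.mem_sdiff.1 hi).2]
        rw [if_pos h1, if_neg h2, mul_zero, if_neg this]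
    · have : y ≠ S.piecewise u x := by
        intro hv
        exact h1 fun i hi => by rw [hv, Finset.piecewise_eq_of_mem _ _ _ hi]
      rw [if_neg h1, zero_mul, if_neg this]
  refine Finset.sum_congr rfl fun x _ => ?_
  rw [Finset.sum_comm]
  refine Finset.sum_congr rfl fun u _ => ?_
  calc (∑ y, ∑ v, ρ x y * ρ u v *
        (((if ∀ i ∈ S, x i = v i then (1:ℂ) else 0) * (if ∀ i ∈ S, y i = u i then (1:ℂ) else 0)) *
         ((if ∀ i ∈ univ \ S, x i = y i then (1:ℂ) else 0) *
          (if ∀ i ∈ univ \ S, u i = v i then (1:ℂ) else 0))))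
      = ∑ y, (ρ x y * (if y = S.piecewise u x then (1:ℂ) else 0)) *
          ∑ v, ρ u v * (if v = S.piecewise x u then (1:ℂ) else 0) := by
        refine Finset.sum_congr rfl fun y _ => ?_
        rw [Finset.mul_sum]
        refine Finset.sum_congr rfl fun v _ => ?_
        rw [← hind x u v, ← hind2 x u y]
        ring
    _ = ρ x (S.piecewise u x) * ρ u (S.piecewise x u) := by
        have c1 : (∑ v, ρ u v * (if v = S.piecewise x u then (1:ℂ) else 0)) =
            ρ u (S.piecewise x u) := by
          simp only [mul_ite, mul_one, mul_zero]
          rw [Finset.sum_ite_eq' univ (S.piecewise x u) (ρ u)]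
          simp
        have c2 : (∑ y, ρ x y * (if y = S.piecewise u x then (1:ℂ) else 0)) =
            ρ x (S.piecewise u x) := by
          simp only [mul_ite, mul_one, mul_zero]
          rw [Finset.sum_ite_eq' univ (S.piecewise u x) (ρ x)]
          simp
        rw [← Finset.sum_mul, c1, c2]

lemma sign_prod {n : ℕ} (S T : Finset (Fin n)) :
    (∏ i ∈ S, (if i ∈ T then (1:ℂ) else -1)) = (-1 : ℂ) ^ (S ∩ Tᶜ).card := by
  rw [Finset.prod_ite (fun _ => (1:ℂ)) (fun _ => (-1:ℂ))]
  rw [Finset.prod_const, Finset.prod_const, one_pow, one_mul]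
  have : S.filter (fun i => ¬ i ∈ T) = S ∩ Tᶜ := by
    ext i; simp [Finset.mem_inter, Finset.mem_compl]
  rw [this]

lemma sum_swap5 {ι κ : Type*} [Fintype ι] [Fintype κ] (G : ι → ι → ι → ι → κ → ℂ) :
    ∑ x, ∑ y, ∑ u, ∑ v, ∑ S, G x y u v S = ∑ S, ∑ x, ∑ y, ∑ u, ∑ v, G x y u v S :=
  Eq.trans (Finset.sum_congr rfl fun _ _ => Eq.trans (Finset.sum_congr rfl fun _ _ =>
    Eq.trans (Finset.sum_congr rfl fun _ _ => Finset.sum_comm) Finset.sum_comm)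
      Finset.sum_comm) Finset.sum_comm

/-- The two definitions of the shadow enumerator coincide for `n`-qubit states:
`∑_{supp(E_α) = T} Tr(ρ E_α ρ̃ E_α) = ∑_{S ⊆ [n]} (-1)^(|S ∩ Tᶜ|) Tr(ρ_S²)`,
where `ρ̃ = Y^{⊗n} ρ̄ Y^{⊗n}` is the state inversion. -/
theorem shadow_enumerator_defs_equivalent {n : ℕ}
    (ρ : Matrix (Fin n → Fin 2) (Fin n → Fin 2) ℂ) (hρ : IsDensity ρ)
    (T : Finset (Fin n)) :
    (∑ α ∈ Finset.univ.filter (fun α : Fin n → Fin 4 => psupp α = T),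
        (ρ * pauliString α * stateInversion ρ * pauliString α).trace) =
      ∑ S : Finset (Fin n), (-1 : ℂ) ^ (S ∩ Tᶜ).card * overlap (fun _ => 2) S ρ ρ := by
  classical
  have hH : ρ.IsHermitian := hρ.1.1
  -- Step 1: expand the LHS
  rw [filter_psupp T]
  calc (∑ α ∈ Fintype.piFinset (fun i => if i ∈ T then ({1,2,3} : Finset (Fin 4)) else {0}),
        (ρ * pauliString α * stateInversion ρ * pauliString α).trace)
      = ∑ α ∈ Fintype.piFinset (fun i => if i ∈ T then ({1,2,3} : Finset (Fin 4)) else {0}),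
          ∑ x, ∑ y, ∑ u, ∑ v, ρ x y * ρ u v * ∏ i, fL (α i) (x i) (y i) (u i) (v i) :=
        Finset.sum_congr rfl fun α _ => lhs_trace ρ hH α
    _ = ∑ x, ∑ y, ∑ u, ∑ v, ρ x y * ρ u v *
          ∏ i, ∑ j ∈ (if i ∈ T then ({1,2,3} : Finset (Fin 4)) else {0}),
            fL j (x i) (y i) (u i) (v i) := by
        rw [Finset.sum_comm]
        refine Finset.sum_congr rfl fun x _ => ?_
        rw [Finset.sum_comm]
        refine Finset.sum_congr rfl fun y _ => ?_
        rw [Finset.sum_comm]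
        refine Finset.sum_congr rfl fun u _ => ?_
        rw [Finset.sum_comm]
        refine Finset.sum_congr rfl fun v _ => ?_
        rw [← Finset.mul_sum]
        congr 1
        rw [Finset.prod_univ_sum]
    _ = ∑ x, ∑ y, ∑ u, ∑ v, ρ x y * ρ u v *
          ∏ i, ((if i ∈ T then (1:ℂ) else -1) *
              ((if x i = v i then (1:ℂ) else 0) * (if y i = u i then (1:ℂ) else 0)) +
            (if x i = y i then (1:ℂ) else 0) * (if u i = v i then (1:ℂ) else 0)) := by
        refine Finset.sum_congr rfl fun x _ => Finset.sum_congr rfl fun y _ =>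
          Finset.sum_congr rfl fun u _ => Finset.sum_congr rfl fun v _ => ?_
        congr 1
        exact Finset.prod_congr rfl fun i _ => kernel (i ∈ T) (x i) (y i) (u i) (v i)
    _ = ∑ S : Finset (Fin n), (-1 : ℂ) ^ (S ∩ Tᶜ).card * overlap (fun _ => 2) S ρ ρ := by
        have expand : ∀ x y u v : Fin n → Fin 2,
            (∏ i, ((if i ∈ T then (1:ℂ) else -1) *
                ((if x i = v i then (1:ℂ) else 0) * (if y i = u i then (1:ℂ) else 0)) +
              (if x i = y i then (1:ℂ) else 0) * (if u i = v i then (1:ℂ) else 0))) =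
            ∑ S : Finset (Fin n), (-1 : ℂ) ^ (S ∩ Tᶜ).card *
              (((if ∀ i ∈ S, x i = v i then (1:ℂ) else 0) *
                (if ∀ i ∈ S, y i = u i then (1:ℂ) else 0)) *
               ((if ∀ i ∈ univ \ S, x i = y i then (1:ℂ) else 0) *
                (if ∀ i ∈ univ \ S, u i = v i then (1:ℂ) else 0))) := by
          intro x y u v
          rw [Finset.prod_add, Finset.powerset_univ]
          refine Finset.sum_congr rfl fun S _ => ?_
          rw [Finset.prod_mul_distrib, Finset.prod_mul_distrib, sign_prod S T,
            Finset.prod_mul_distrib, Finset.prod_boole, Finset.prod_boole,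
            Finset.prod_boole, Finset.prod_boole]
          ring
        simp_rw [expand, Finset.mul_sum]
        rw [sum_swap5]
        refine Finset.sum_congr rfl fun S _ => ?_
        rw [overlap_eq_s16 S ρ, ← collapse S ρ]
        simp only [Finset.mul_sum]
        refine Finset.sum_congr rfl fun x _ => Finset.sum_congr rfl fun y _ =>
          Finset.sum_congr rfl fun u _ => Finset.sum_congr rfl fun v _ => ?_
        ring
end

section
/- Let ρ, σ be density matrices on an n-partite Hilbert space with p(z) = (1/2^n) ∑_S (-1)^(|S ∩ supp(z)|) Tr(ρ_S σ_S). Then p(0) = 1 if and only if ρ = σ and ρ is a pure product state (i.e., ρ = ⊗_{i=1}^n |ψ_i⟩⟨ψ_i| for some unit vectors ψ_i). -/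
open Finset ComplexOrder

/-!
Each overlap `Tr(ρ_S σ_S)` of two density matrices is at most `1`, because
`‖ρ_S - σ_S‖² = Tr ρ_S² + Tr σ_S² - 2 Tr(ρ_S σ_S)` and purities are at most `1`; so `p(0) = 1`
forces every overlap to be `1`. For `S = [n]` this gives `ρ = σ` and `Tr ρ² = 1`, so
`ρ = |φ⟩⟨φ|` is pure. For `S = {i}` the marginal `ρ_{i} = |vᵢ⟩⟨vᵢ|` is pure too, which forces
`φ(x) = vᵢ(xᵢ) cᵢ(x_{≠i})`; changing one site at a time shows that `φ` is a multiple of `⊗ᵢ vᵢ`.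
Conversely, every reduced state of a pure product state is pure, so every overlap is `1`.
-/

open Matrix

theorem Finset.sum_sq_le_one_of_sum_eq_one {ι : Type*} [Fintype ι] {f : ι → ℝ}
    (h0 : ∀ i, 0 ≤ f i) (h1 : ∑ i, f i = 1) : ∑ i, f i ^ 2 ≤ 1 := by
  have hle : ∀ i, f i ≤ 1 := fun i => h1 ▸ single_le_sum (fun j _ => h0 j) (mem_univ i)
  calc ∑ i, f i ^ 2 ≤ ∑ i, f i :=
        sum_le_sum fun i _ => by nlinarith [mul_nonneg (h0 i) (sub_nonneg.2 (hle i))]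
    _ = 1 := h1

theorem Finset.exists_eq_single_of_sum_sq_eq_one {ι : Type*} [Fintype ι] [DecidableEq ι]
    {f : ι → ℝ} (h0 : ∀ i, 0 ≤ f i) (h1 : ∑ i, f i = 1) (h2 : ∑ i, f i ^ 2 = 1) :
    ∃ i, f = Pi.single i 1 := by
  have hle : ∀ i, f i ≤ 1 := fun i => h1 ▸ single_le_sum (fun j _ => h0 j) (mem_univ i)
  have hidem : ∀ i, f i * (1 - f i) = 0 := by
    have hsum : ∑ i, f i * (1 - f i) = 0 := by
      simp only [mul_sub, mul_one, sum_sub_distrib, h1, ← sq, h2, sub_self]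
    exact fun i => (sum_eq_zero_iff_of_nonneg fun j _ =>
      mul_nonneg (h0 j) (sub_nonneg.2 (hle j))).1 hsum i (mem_univ i)
  obtain ⟨i, -, hi⟩ := exists_ne_zero_of_sum_ne_zero (h1.trans_ne one_ne_zero)
  have hi1 : f i = 1 := by linarith [(mul_eq_zero.1 (hidem i)).resolve_left hi]
  refine ⟨i, funext fun j => ?_⟩
  rcases eq_or_ne j i with rfl | hj
  · simpa using hi1
  · have : f i + f j ≤ 1 := by
      rw [← sum_pair hj.symm, ← h1]
      exact sum_le_sum_of_subset_of_nonneg (subset_univ _) fun k _ _ => h0 k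
    simpa [hj] using le_antisymm (by linarith) (h0 j)

namespace Matrix

section

variable {m : Type*} [Fintype m]

theorem IsHermitian.trace_conjTranspose_sub_mul_sub {A B : Matrix m m ℂ} (hA : A.IsHermitian)
    (hB : B.IsHermitian) :
    ((A - B)ᴴ * (A - B)).trace = (A * A).trace + (B * B).trace - 2 * (A * B).trace := by
  rw [(hA.sub hB).eq, sub_mul, mul_sub, mul_sub, trace_sub, trace_sub, trace_sub,
    trace_mul_comm B A]
  ring

variable [DecidableEq m]

theorem IsHermitian.trace_mul_self {A : Matrix m m ℂ} (hA : A.IsHermitian) :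
    (A * A).trace = ((∑ i, hA.eigenvalues i ^ 2 : ℝ) : ℂ) := by
  conv_lhs => rw [hA.spectral_theorem, ← map_mul, Unitary.conjStarAlgAut_apply, trace_mul_cycle,
    Unitary.coe_star_mul_self, one_mul, diagonal_mul_diagonal, trace_diagonal]
  simp [sq]

end

variable {α β : Type*} [Fintype β]

def traceRight {R : Type*} [AddCommMonoid R] (M : Matrix (α × β) (α × β) R) : Matrix α α R :=
  of fun a a' => ∑ b, M (a, b) (a', b)

theorem trace_traceRight [Fintype α] {R : Type*} [AddCommMonoid R] (M : Matrix (α × β) (α × β) R) :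
    (traceRight M).trace = M.trace :=
  (Fintype.sum_prod_type fun p => M p p).symm

theorem PosSemidef.traceRight {M : Matrix (α × β) (α × β) ℂ} (hM : M.PosSemidef) :
    (Matrix.traceRight M).PosSemidef := by
  have : Matrix.traceRight M = ∑ b, M.submatrix (·, b) (·, b) := by
    ext a a'
    simp [Matrix.traceRight, sum_apply]
  rw [this]
  exact posSemidef_sum _ fun b _ => hM.submatrix _

variable {R : Type*} [CommRing R] [StarRing R]

theorem traceRight_vecMulVec (φ : α × β → R) :
    traceRight (vecMulVec φ (star φ)) = of (Function.curry φ) * (of (Function.curry φ))ᴴ := by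
  ext a a'
  simp [traceRight, mul_apply, vecMulVec_apply]

theorem traceRight_vecMulVec_mul {u : α → R} {w : β → R} (hw : star w ⬝ᵥ w = 1) :
    traceRight (vecMulVec (fun p => u p.1 * w p.2) (star fun p => u p.1 * w p.2)) =
      vecMulVec u (star u) := by
  rw [traceRight_vecMulVec]
  change vecMulVec u w * (vecMulVec u w)ᴴ = _
  rw [conjTranspose_vecMulVec, vecMulVec_mul_vecMulVec, dotProduct_comm, hw, one_smul]

variable [Fintype α]

theorem vecMulVec_mul_self_of_star_dotProduct_self {v : α → R} (hv : star v ⬝ᵥ v = 1) :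
    vecMulVec v (star v) * vecMulVec v (star v) = vecMulVec v (star v) := by
  rw [vecMulVec_mul_vecMulVec, hv, one_smul]

theorem vecMulVec_star_eq_of_mul_eq_mul {u w : α → R} (hu : star u ⬝ᵥ u = 1)
    (hw : star w ⬝ᵥ w = 1) (h : ∀ x y, u x * w y = u y * w x) :
    vecMulVec u (star u) = vecMulVec w (star w) := by
  set c := star w ⬝ᵥ u
  have hu_eq : ∀ x, u x = c * w x := fun x => calc
    u x = u x * (star w ⬝ᵥ w) := by rw [hw, mul_one]
    _ = ∑ y, star (w y) * (u x * w y) := by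
      rw [dotProduct, Finset.mul_sum]
      exact Finset.sum_congr rfl fun y _ => by simp only [Pi.star_apply]; ring
    _ = ∑ y, star (w y) * (u y * w x) := by simp only [h x]
    _ = c * w x := by
      simp only [c, dotProduct, Finset.sum_mul, Pi.star_apply]
      exact Finset.sum_congr rfl fun y _ => by ring
  have hc : star c * c = 1 := calc
    star c * c = star c * c * (star w ⬝ᵥ w) := by rw [hw, mul_one]
    _ = star u ⬝ᵥ u := by
      simp only [dotProduct, Finset.mul_sum, Pi.star_apply, hu_eq, star_mul']
      exact Finset.sum_congr rfl fun y _ => by ring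
    _ = 1 := hu
  ext x y
  simp only [vecMulVec_apply, Pi.star_apply, hu_eq, star_mul']
  linear_combination (w x * star (w y)) * hc

variable [PartialOrder R] [StarOrderedRing R] [NoZeroDivisors R]

theorem eq_vecMulVec_of_mul_conjTranspose_eq {F : Matrix α β R} {v : α → R}
    (hv : star v ⬝ᵥ v = 1) (hF : F * Fᴴ = vecMulVec v (star v)) :
    F = vecMulVec v (star v ᵥ* F) := by
  set P := vecMulVec v (star v)
  have hPP : P * P = P := vecMulVec_mul_self_of_star_dotProduct_self hv
  have hPH : Pᴴ = P := by simp [P]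
  -- `F - P F` has Gram matrix `P - 2 P² + P³ = 0`, as `P = v v*` is a projection
  have h0 : (F - P * F) * (F - P * F)ᴴ = 0 := by
    simp only [conjTranspose_sub, conjTranspose_mul, hPH, Matrix.sub_mul, Matrix.mul_sub,
      ← Matrix.mul_assoc]
    rw [Matrix.mul_assoc P F, hF, hPP, hPP, sub_self]
  rw [self_mul_conjTranspose_eq_zero, sub_eq_zero] at h0
  rw [← vecMulVec_mul, ← h0]

theorem exists_eq_mul_of_traceRight_eq_vecMulVec {φ : α × β → R} {v : α → R}
    (hv : star v ⬝ᵥ v = 1) (h : traceRight (vecMulVec φ (star φ)) = vecMulVec v (star v)) :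
    ∃ c : β → R, ∀ a b, φ (a, b) = v a * c b := by
  rw [traceRight_vecMulVec] at h
  exact ⟨_, fun a b => congr_fun₂ (eq_vecMulVec_of_mul_conjTranspose_eq hv h) a b⟩

end Matrix

namespace IsDensity

variable {m m' : Type*} [Fintype m] [DecidableEq m] [Fintype m'] [DecidableEq m']
  {A B : Matrix m m ℂ}

theorem sum_eigenvalues (hA : IsDensity A) : ∑ i, hA.1.1.eigenvalues i = 1 := by
  have h := hA.1.1.trace_eq_sum_eigenvalues.symm.trans hA.2
  exact Complex.ofReal_eq_one.1 (by simpa using h)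

theorem trace_mul_self_le_one (hA : IsDensity A) : (A * A).trace ≤ 1 := by
  rw [hA.1.1.trace_mul_self]
  exact_mod_cast sum_sq_le_one_of_sum_eq_one hA.1.eigenvalues_nonneg hA.sum_eigenvalues

theorem trace_conjTranspose_sub_mul_sub_le (hA : IsDensity A) (hB : IsDensity B) :
    ((A - B)ᴴ * (A - B)).trace ≤ 2 - 2 * (A * B).trace := by
  rw [hA.1.1.trace_conjTranspose_sub_mul_sub hB.1.1, ← one_add_one_eq_two (R := ℂ)]
  gcongr
  exacts [hA.trace_mul_self_le_one, hB.trace_mul_self_le_one]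

theorem trace_mul_le_one (hA : IsDensity A) (hB : IsDensity B) : (A * B).trace ≤ 1 := by
  have h := (posSemidef_conjTranspose_mul_self (A - B)).trace_nonneg.trans
    (hA.trace_conjTranspose_sub_mul_sub_le hB)
  rw [sub_nonneg] at h
  exact le_of_mul_le_mul_left (h.trans_eq (mul_one 2).symm) two_pos

theorem eq_of_trace_mul_eq_one (hA : IsDensity A) (hB : IsDensity B) (h : (A * B).trace = 1) :
    A = B := by
  have hle := hA.trace_conjTranspose_sub_mul_sub_le hB
  rw [h, mul_one, sub_self] at hle
  exact sub_eq_zero.1 <| trace_conjTranspose_mul_self_eq_zero_iff.1 <|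
    le_antisymm hle (posSemidef_conjTranspose_mul_self _).trace_nonneg

theorem exists_eq_vecMulVec_of_trace_mul_self_eq_one (hA : IsDensity A)
    (h : (A * A).trace = 1) : ∃ v : m → ℂ, star v ⬝ᵥ v = 1 ∧ A = vecMulVec v (star v) := by
  obtain ⟨i, hi⟩ := exists_eq_single_of_sum_sq_eq_one hA.1.eigenvalues_nonneg
    hA.sum_eigenvalues (by exact_mod_cast hA.1.1.trace_mul_self.symm.trans h)
  set U : Matrix m m ℂ := ↑hA.1.1.eigenvectorUnitary
  refine ⟨U.col i, ?_, ?_⟩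
  · simpa [U, mul_apply, dotProduct, col] using
      congr_fun₂ (Unitary.coe_star_mul_self hA.1.1.eigenvectorUnitary) i i
  · conv_lhs => rw [hA.1.1.spectral_theorem, hi]
    ext x y
    simp [U, mul_apply, col, diagonal, Pi.single_apply, apply_ite, vecMulVec_apply]

theorem submatrix_equiv (hA : IsDensity A) (e : m' ≃ m) :
    IsDensity (A.submatrix e e) :=
  ⟨hA.1.submatrix e, (Equiv.sum_comp e fun i => A i i).trans hA.2⟩

theorem traceRight {M : Matrix (m × m') (m × m') ℂ} (hM : IsDensity M) :
    IsDensity (traceRight M) :=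
  ⟨hM.1.traceRight, (trace_traceRight M).trans hM.2⟩

end IsDensity

def pureTensor {ι : Type*} [Fintype ι] {β : ι → Type*} {R : Type*} [CommMonoid R]
    (ψ : ∀ i, β i → R) (x : ∀ i, β i) : R :=
  ∏ i, ψ i (x i)

theorem star_dotProduct_pureTensor {ι : Type*} [Fintype ι] [DecidableEq ι] {β : ι → Type*}
    [∀ i, Fintype (β i)] {R : Type*} [CommRing R] [StarRing R] (ψ : ∀ i, β i → R) :
    star (pureTensor ψ) ⬝ᵥ pureTensor ψ = ∏ i, star (ψ i) ⬝ᵥ ψ i := by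
  simp only [pureTensor, dotProduct, Pi.star_apply, star_prod, ← prod_mul_distrib]
  exact (Fintype.prod_sum fun i a => star (ψ i a) * ψ i a).symm

theorem mul_prod_eq_mul_prod_of_update {ι : Type*} [Fintype ι] [DecidableEq ι] {β : ι → Type*}
    {M : Type*} [CommMonoid M] {φ : (∀ i, β i) → M} {ψ : ∀ i, β i → M}
    (h : ∀ i x a, φ (Function.update x i a) * ψ i (x i) = φ x * ψ i a) (x y : ∀ i, β i) :
    φ x * ∏ i, ψ i (y i) = φ y * ∏ i, ψ i (x i) := by
  -- induct on a set of sites outside of which `x` and `y` agree, changing one site at a time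
  suffices key : ∀ T : Finset ι, ∀ x y : ∀ i, β i, (∀ i ∉ T, x i = y i) →
      φ x * ∏ i ∈ T, ψ i (y i) = φ y * ∏ i ∈ T, ψ i (x i) from
    key univ x y fun i hi => absurd (mem_univ i) hi
  intro T
  induction T using Finset.induction_on with
  | empty =>
    intro x y hxy
    rw [funext fun i => hxy i (notMem_empty i)]
  | insert i T hi ih =>
    intro x y hxy
    have hzy := ih (Function.update x i (y i)) y fun j hj => by
      rcases eq_or_ne j i with rfl | hji
      · exact Function.update_self ..
      · rw [Function.update_of_ne hji]
        exact hxy j (by simp [hji, hj])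
    have hzx : ∏ j ∈ T, ψ j (Function.update x i (y i) j) = ∏ j ∈ T, ψ j (x j) :=
      prod_congr rfl fun j hj => by rw [Function.update_of_ne (ne_of_mem_of_not_mem hj hi)]
    rw [prod_insert hi, prod_insert hi]
    calc φ x * (ψ i (y i) * ∏ j ∈ T, ψ j (y j))
        = φ (Function.update x i (y i)) * (∏ j ∈ T, ψ j (y j)) * ψ i (x i) := by
          rw [← mul_assoc, ← h, mul_right_comm]
      _ = φ y * (ψ i (x i) * ∏ j ∈ T, ψ j (x j)) := by
          rw [hzy, hzx, mul_assoc, mul_comm (∏ j ∈ T, _)]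

section PartialTrace

variable {n : ℕ} {d : Fin n → ℕ}

abbrev splitSites (d : Fin n → ℕ) (S : Finset (Fin n)) :=
  Equiv.piEquivPiSubtypeProd (· ∈ S) fun i => Fin (d i)

theorem ptrace_eq_traceRight (S : Finset (Fin n))
    (ρ : Matrix ((i : Fin n) → Fin (d i)) ((i : Fin n) → Fin (d i)) ℂ) :
    ptrace d S ρ = traceRight (ρ.submatrix (splitSites d S).symm (splitSites d S).symm) :=
  rfl

theorem IsDensity.ptrace {ρ : Matrix ((i : Fin n) → Fin (d i)) ((i : Fin n) → Fin (d i)) ℂ}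
    (hρ : IsDensity ρ) (S : Finset (Fin n)) : IsDensity (ptrace d S ρ) :=
  (hρ.submatrix_equiv (splitSites d S).symm).traceRight

theorem overlap_univ (ρ σ : Matrix ((i : Fin n) → Fin (d i)) ((i : Fin n) → Fin (d i)) ℂ) :
    overlap d univ ρ σ = (ρ * σ).trace := by
  have : IsEmpty {j : Fin n // j ∉ univ} := ⟨fun j => j.2 (mem_univ _)⟩
  set e := (Equiv.prodUnique _ _).symm.trans (splitSites d univ).symm
  have hptrace : ∀ ρ, ptrace d univ ρ = ρ.submatrix e e := fun ρ => by
    ext x y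
    exact Fintype.sum_unique _
  rw [overlap, hptrace, hptrace, submatrix_mul_equiv]
  exact Equiv.sum_comp e fun x => (ρ * σ) x x

theorem exists_eq_mul_of_ptrace_eq_vecMulVec {S : Finset (Fin n)}
    {φ : ((i : Fin n) → Fin (d i)) → ℂ} {v : ((i : {j // j ∈ S}) → Fin (d i.1)) → ℂ}
    (hv : star v ⬝ᵥ v = 1) (h : ptrace d S (vecMulVec φ (star φ)) = vecMulVec v (star v)) :
    ∃ c : ((i : {j // j ∉ S}) → Fin (d i.1)) → ℂ,
      ∀ x, φ x = v (fun i => x i) * c (fun i => x i) := by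
  obtain ⟨c, hc⟩ :=
    exists_eq_mul_of_traceRight_eq_vecMulVec (φ := φ ∘ (splitSites d S).symm) hv h
  refine ⟨c, fun x => ?_⟩
  have := hc (splitSites d S x).1 (splitSites d S x).2
  rwa [Function.comp_apply, Prod.mk.eta, Equiv.symm_apply_apply] at this

theorem exists_update_mul_eq_of_overlap_singleton_eq_one
    {φ : ((i : Fin n) → Fin (d i)) → ℂ} (hφ : IsDensity (vecMulVec φ (star φ))) (i : Fin n)
    (h : overlap d {i} (vecMulVec φ (star φ)) (vecMulVec φ (star φ)) = 1) :
    ∃ ψ : Fin (d i) → ℂ, star ψ ⬝ᵥ ψ = 1 ∧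
      ∀ x a, φ (Function.update x i a) * ψ (x i) = φ x * ψ a := by
  obtain ⟨v, hv, hρv⟩ := (hφ.ptrace {i}).exists_eq_vecMulVec_of_trace_mul_self_eq_one h
  obtain ⟨c, hc⟩ := exists_eq_mul_of_ptrace_eq_vecMulVec hv hρv
  set e := Equiv.piUnique fun j : {j // j ∈ ({i} : Finset (Fin n))} => Fin (d j.1)
  have he : ∀ x : (i : Fin n) → Fin (d i),
      (fun j : {j // j ∈ ({i} : Finset (Fin n))} => x j) = e.symm (x i) :=
    fun x => e.eq_symm_apply.2 rfl
  refine ⟨v ∘ e.symm, ?_, fun x a => ?_⟩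
  · rw [← hv]
    exact Equiv.sum_comp e.symm fun p => star (v p) * v p
  · have hrest : (fun j : {j // j ∉ ({i} : Finset (Fin n))} => Function.update x i a j) =
        fun j : {j // j ∉ ({i} : Finset (Fin n))} => x j :=
      funext fun j => Function.update_of_ne (by simpa using j.2) _ _
    rw [hc, hc x, hrest, he, he, Function.update_self]
    simp only [Function.comp_apply]
    ring

theorem ptrace_vecMulVec_pureTensor {ψ : (i : Fin n) → Fin (d i) → ℂ}
    (hψ : ∀ i, star (ψ i) ⬝ᵥ ψ i = 1) (S : Finset (Fin n)) :
    ptrace d S (vecMulVec (pureTensor ψ) (star (pureTensor ψ))) =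
      vecMulVec (pureTensor fun i : {j // j ∈ S} => ψ i.1)
        (star (pureTensor fun i : {j // j ∈ S} => ψ i.1)) := by
  have hsplit : ∀ p, pureTensor ψ ((splitSites d S).symm p) =
      pureTensor (fun i : {j // j ∈ S} => ψ i.1) p.1 *
        pureTensor (fun i : {j // j ∉ S} => ψ i.1) p.2 := fun p => by
    simp only [pureTensor]
    rw [← Fintype.prod_subtype_mul_prod_subtype (· ∈ S) fun i => ψ i ((splitSites d S).symm p i)]
    congr 1
    -- the two sides index `{j // j ∈ S}` by different `Fintype` instances
    · exact prod_congr (congrArg _ (Subsingleton.elim _ _)) fun j _ => congrArg _ (dif_pos j.2)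
    · exact prod_congr rfl fun j _ => congrArg _ (dif_neg j.2)
  rw [ptrace_eq_traceRight]
  exact (congrArg (fun φ => traceRight (vecMulVec φ (star φ))) (funext hsplit)).trans
    (traceRight_vecMulVec_mul <|
      (star_dotProduct_pureTensor _).trans (prod_eq_one fun i _ => hψ i))

theorem overlap_vecMulVec_pureTensor {ψ : (i : Fin n) → Fin (d i) → ℂ}
    (hψ : ∀ i, star (ψ i) ⬝ᵥ ψ i = 1) (S : Finset (Fin n)) :
    overlap d S (vecMulVec (pureTensor ψ) (star (pureTensor ψ)))
      (vecMulVec (pureTensor ψ) (star (pureTensor ψ))) = 1 := by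
  have hnorm := (star_dotProduct_pureTensor fun i : {j // j ∈ S} => ψ i.1).trans
    (prod_eq_one fun i _ => hψ i)
  rw [overlap, ptrace_vecMulVec_pureTensor hψ, vecMulVec_mul_self_of_star_dotProduct_self hnorm,
    trace_vecMulVec, dotProduct_comm, hnorm]

end PartialTrace

/-- In the `n`-qubit parallelized SWAP test of `ρ` and `σ`,
`p(0) = (1/2^n) ∑_{S ⊆ [n]} Tr(ρ_S σ_S) = 1` if and only if `ρ = σ` and `ρ` is a
pure product state `⊗ᵢ |ψᵢ⟩⟨ψᵢ|`. -/
theorem swap_test_p_zero_iff_product {n : ℕ} (d : Fin n → ℕ)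
    (ρ σ : Matrix ((i : Fin n) → Fin (d i)) ((i : Fin n) → Fin (d i)) ℂ)
    (hρ : IsDensity ρ) (hσ : IsDensity σ) :
    ((1 / 2 ^ n : ℂ) * ∑ S : Finset (Fin n), overlap d S ρ σ) = 1 ↔
      (ρ = σ ∧ ∃ ψ : (i : Fin n) → Fin (d i) → ℂ,
        (∀ i, ∑ a, (starRingEnd ℂ) (ψ i a) * ψ i a = 1) ∧
        ρ = Matrix.of fun x y => ∏ i, ψ i (x i) * (starRingEnd ℂ) (ψ i (y i))) := by
  have hpure : ∀ ψ : (i : Fin n) → Fin (d i) → ℂ,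
      (Matrix.of fun x y => ∏ i, ψ i (x i) * (starRingEnd ℂ) (ψ i (y i))) =
        vecMulVec (pureTensor ψ) (star (pureTensor ψ)) := fun ψ => by
    ext x y
    simp [pureTensor, vecMulVec_apply, prod_mul_distrib]
  have hcard : (2 : ℂ) ^ n = ∑ _S : Finset (Fin n), 1 := by simp
  rw [one_div, inv_mul_eq_one₀ (pow_ne_zero _ two_ne_zero), hcard, eq_comm]
  constructor
  · intro h
    have hone : ∀ S, overlap d S ρ σ = 1 := fun S =>
      ((sum_eq_sum_iff_of_le fun S _ => (hρ.ptrace S).trace_mul_le_one (hσ.ptrace S)).1 h S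
        (mem_univ S))
    obtain rfl : ρ = σ := hρ.eq_of_trace_mul_eq_one hσ (overlap_univ ρ σ ▸ hone univ)
    obtain ⟨φ, hφ, rfl⟩ :=
      hρ.exists_eq_vecMulVec_of_trace_mul_self_eq_one (overlap_univ ρ ρ ▸ hone univ)
    choose ψ hψ hsite using fun i =>
      exists_update_mul_eq_of_overlap_singleton_eq_one hρ i (hone {i})
    refine ⟨rfl, ψ, hψ, ?_⟩
    rw [hpure]
    exact vecMulVec_star_eq_of_mul_eq_mul hφ
      ((star_dotProduct_pureTensor ψ).trans (prod_eq_one fun i _ => hψ i))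
      (mul_prod_eq_mul_prod_of_update hsite)
  · rintro ⟨rfl, ψ, hψ, rfl⟩
    rw [hpure]
    exact sum_congr rfl fun S _ => overlap_vecMulVec_pureTensor hψ S
end
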